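/- arXiv:1712.10261 — 5 statements merged into one kernel-verified Lean document; each statement's English description precedes it below -/
import Mathlib

section
/- Let n ≥ 2, d ≥ 1, 0 < ε ≤ 1/3, and let f : ℝ^n → ℝ be any function. Then the number of simple d-regular graphs G on the labelled vertex set {1,…,n} such that (1−ε)·xᵀL_G x ≤ f(x) ≤ (1+ε)·xᵀL_G x for all x ∈ ℝ^n is at most 2^(dn/2 + 5ε²d²n·log₂ n). -/
/-!
If `f` is an `ε`-sketch of two `d`-regular graphs `G` and `H`, then
`|xᵀ(L_G - L_H)x| ≤ ε · xᵀ(L_G + L_H)x` for all `x`. Testing this on an orthonormal eigenbasis of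
`L_G - L_H` and applying Cauchy–Schwarz gives `‖L_G - L_H‖_F² ≤ ε² ‖L_G + L_H‖_F²`. The left side
is `4 |E(G) \ E(H)|` and the right side is at most `4ε²n(d² + d)`, so every sketched graph differs
from a fixed sketched graph `G₀` by at most `m = ε²n(d² + d)` added edges. Such a graph is
determined by the added edges (a set of at most `m` pairs, `≤ n^(2m)` choices) and the removed
ones (a subset of `E(G₀)`, `2^(dn/2)` choices).
-/

open Matrix

/-- The Laplacian quadratic form `xᵀ L_G x` of a simple graph `G` on vertex set `Fin n`. -/
noncomputable def lapQuadForm {n : ℕ} (G : SimpleGraph (Fin n)) (x : Fin n → ℝ) : ℝ :=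
  letI := Classical.decRel G.Adj
  x ⬝ᵥ (G.lapMatrix ℝ *ᵥ x)

/-- `G` is `d`-regular: every vertex has degree `d`. -/
def IsRegOfDeg {n : ℕ} (G : SimpleGraph (Fin n)) (d : ℕ) : Prop :=
  letI := Classical.decRel G.Adj
  G.IsRegularOfDegree d

open Finset

section FrobeniusBound

variable {ι : Type*} [Fintype ι]

theorem OrthonormalBasis.sum_norm_sq_mulVec {m κ : Type*} [Fintype m] [Fintype κ]
    (A : Matrix m ι ℝ) (b : OrthonormalBasis κ ℝ (EuclideanSpace ℝ ι)) :
    ∑ k, ‖WithLp.toLp 2 (A *ᵥ b k)‖ ^ 2 = ∑ i, ∑ j, A i j ^ 2 := by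
  have row (i : m) (k : κ) : (A *ᵥ b k) i = inner ℝ (b k) (WithLp.toLp 2 (A i)) := by
    simp [EuclideanSpace.inner_eq_star_dotProduct, mulVec]
  simp_rw [EuclideanSpace.real_norm_sq_eq, row]
  rw [Finset.sum_comm]
  refine Finset.sum_congr rfl fun i _ => ?_
  rw [b.sum_sq_inner_right, EuclideanSpace.real_norm_sq_eq]

theorem dotProduct_mulVec_sq_le_norm_sq {M : Matrix ι ι ℝ} {v : EuclideanSpace ℝ ι} (hv : ‖v‖ = 1) :
    (v ⬝ᵥ M *ᵥ v) ^ 2 ≤ ‖WithLp.toLp 2 (M *ᵥ v)‖ ^ 2 := by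
  have : v ⬝ᵥ M *ᵥ v = inner ℝ v (WithLp.toLp 2 (M *ᵥ v)) := by
    simp [EuclideanSpace.inner_eq_star_dotProduct, dotProduct_comm]
  rw [this, ← sq_abs]
  have := abs_real_inner_le_norm v (WithLp.toLp 2 (M *ᵥ v))
  rw [hv, one_mul] at this
  gcongr

variable [DecidableEq ι]

theorem Matrix.IsHermitian.sum_sq_le_of_abs_dotProduct_mulVec_le {B M : Matrix ι ι ℝ} {ε : ℝ}
    (hB : B.IsHermitian) (h : ∀ x, |x ⬝ᵥ B *ᵥ x| ≤ ε * (x ⬝ᵥ M *ᵥ x)) :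
    ∑ i, ∑ j, B i j ^ 2 ≤ ε ^ 2 * ∑ i, ∑ j, M i j ^ 2 := by
  set b := hB.eigenvectorBasis
  have hb (k) : ‖b k‖ = 1 := b.orthonormal.1 k
  have eigenvalue_sq (k) : ‖WithLp.toLp 2 (B *ᵥ b k)‖ ^ 2 = hB.eigenvalues k ^ 2 := by
    rw [hB.mulVec_eigenvectorBasis, WithLp.toLp_smul, norm_smul, WithLp.toLp_ofLp, hb,
      mul_one, Real.norm_eq_abs, sq_abs]
  have eigenvalue_le (k) : hB.eigenvalues k ^ 2 ≤ ε ^ 2 * ‖WithLp.toLp 2 (M *ᵥ b k)‖ ^ 2 := by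
    have heig : hB.eigenvalues k = b k ⬝ᵥ B *ᵥ b k := by simp [hB.eigenvalues_eq, b]
    calc hB.eigenvalues k ^ 2 ≤ (ε * (b k ⬝ᵥ M *ᵥ b k)) ^ 2 := by
          rw [← sq_abs (hB.eigenvalues k), heig]
          exact pow_le_pow_left₀ (abs_nonneg _) (h _) 2
      _ ≤ ε ^ 2 * ‖WithLp.toLp 2 (M *ᵥ b k)‖ ^ 2 := by
          rw [mul_pow]
          exact mul_le_mul_of_nonneg_left (dotProduct_mulVec_sq_le_norm_sq (hb k)) (sq_nonneg ε)
  calc ∑ i, ∑ j, B i j ^ 2 = ∑ k, hB.eigenvalues k ^ 2 := by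
        simp_rw [← b.sum_norm_sq_mulVec, eigenvalue_sq]
    _ ≤ ∑ k, ε ^ 2 * ‖WithLp.toLp 2 (M *ᵥ b k)‖ ^ 2 := sum_le_sum fun k _ => eigenvalue_le k
    _ = ε ^ 2 * ∑ i, ∑ j, M i j ^ 2 := by rw [← mul_sum, b.sum_norm_sq_mulVec]

end FrobeniusBound

namespace SimpleGraph

variable {V : Type*} [Fintype V] {G H : SimpleGraph V} [DecidableRel G.Adj] [DecidableRel H.Adj]
  {d : ℕ}

theorem IsRegularOfDegree.two_mul_card_edgeFinset (hG : G.IsRegularOfDegree d) :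
    2 * #G.edgeFinset = Fintype.card V * d := by
  simp [← sum_degrees_eq_twice_card_edges, hG.degree_eq]

variable [DecidableEq V]

theorem lapMatrix_sub_lapMatrix_of_degree_eq (h : ∀ v, G.degree v = H.degree v) :
    G.lapMatrix ℝ - H.lapMatrix ℝ = H.adjMatrix ℝ - G.adjMatrix ℝ := by
  have : G.degMatrix ℝ = H.degMatrix ℝ := by simp [degMatrix, h]
  rw [lapMatrix, lapMatrix, this]
  abel

theorem sum_sq_adjMatrix_sub :
    ∑ i, ∑ j, (G.adjMatrix ℝ - H.adjMatrix ℝ) i j ^ 2 =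
      2 * #(G.edgeFinset \ H.edgeFinset) + 2 * #(H.edgeFinset \ G.edgeFinset) := by
  have entry (i j : V) : (G.adjMatrix ℝ - H.adjMatrix ℝ) i j ^ 2 =
      (if (G \ H).Adj i j then 1 else 0) + (if (H \ G).Adj i j then 1 else 0) := by
    by_cases hG : G.Adj i j <;> by_cases hH : H.Adj i j <;> simp [hG, hH]
  simp_rw [entry, sum_add_distrib, ← degree_eq_sum_if_adj]
  -- `sum_degrees_eq_twice_card_edges` fixes the `Fintype` instance on the edge set, while
  -- `edgeFinset_sdiff` comes with a different one.
  have twice (K : SimpleGraph V) [DecidableRel K.Adj] [Fintype K.edgeSet] :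
      ∑ v, (K.degree v : ℝ) = 2 * #K.edgeFinset := by
    obtain rfl : ‹Fintype K.edgeSet› = K.fintypeEdgeSet := Subsingleton.elim _ _
    exact_mod_cast sum_degrees_eq_twice_card_edges K
  rw [twice, twice, edgeFinset_sdiff, edgeFinset_sdiff]

theorem sum_sq_lapMatrix_sub_of_isRegularOfDegree (hG : G.IsRegularOfDegree d)
    (hH : H.IsRegularOfDegree d) :
    ∑ i, ∑ j, (G.lapMatrix ℝ - H.lapMatrix ℝ) i j ^ 2 = 4 * #(G.edgeFinset \ H.edgeFinset) := by
  have hcard : #(H.edgeFinset \ G.edgeFinset) = #(G.edgeFinset \ H.edgeFinset) :=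
    card_sdiff_comm (by linarith [hG.two_mul_card_edgeFinset, hH.two_mul_card_edgeFinset])
  rw [lapMatrix_sub_lapMatrix_of_degree_eq (by simp [hG.degree_eq, hH.degree_eq]),
    sum_sq_adjMatrix_sub, hcard]
  ring

theorem sum_sq_lapMatrix :
    ∑ i, ∑ j, G.lapMatrix ℝ i j ^ 2 = ∑ i, ((G.degree i : ℝ) ^ 2 + G.degree i) := by
  have entry (i j : V) : G.lapMatrix ℝ i j ^ 2 =
      (if i = j then (G.degree i : ℝ) ^ 2 else 0) + (if G.Adj i j then 1 else 0) := by
    by_cases hij : i = j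
    · subst hij; simp [lapMatrix, degMatrix]
    · by_cases hG : G.Adj i j <;> simp [lapMatrix, degMatrix, hij, hG]
  simp_rw [entry, sum_add_distrib, ← degree_eq_sum_if_adj, sum_ite_eq]
  simp

theorem IsRegularOfDegree.sum_sq_lapMatrix (hG : G.IsRegularOfDegree d) :
    ∑ i, ∑ j, G.lapMatrix ℝ i j ^ 2 = Fintype.card V * ((d : ℝ) ^ 2 + d) := by
  simp [SimpleGraph.sum_sq_lapMatrix, hG.degree_eq, mul_add]

theorem sum_sq_lapMatrix_add_le_of_isRegularOfDegree (hG : G.IsRegularOfDegree d)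
    (hH : H.IsRegularOfDegree d) :
    ∑ i, ∑ j, (G.lapMatrix ℝ + H.lapMatrix ℝ) i j ^ 2 ≤ 4 * Fintype.card V * ((d : ℝ) ^ 2 + d) := by
  calc ∑ i, ∑ j, (G.lapMatrix ℝ + H.lapMatrix ℝ) i j ^ 2
      ≤ ∑ i, ∑ j, 2 * (G.lapMatrix ℝ i j ^ 2 + H.lapMatrix ℝ i j ^ 2) :=
        sum_le_sum fun i _ => sum_le_sum fun j _ => add_sq_le
    _ = 2 * ∑ i, ∑ j, G.lapMatrix ℝ i j ^ 2 + 2 * ∑ i, ∑ j, H.lapMatrix ℝ i j ^ 2 := by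
        simp only [mul_add, sum_add_distrib, mul_sum]
    _ = 4 * Fintype.card V * ((d : ℝ) ^ 2 + d) := by
        rw [hG.sum_sq_lapMatrix, hH.sum_sq_lapMatrix]; ring

end SimpleGraph

theorem card_filter_card_le_le_pow {α : Type*} [Fintype α] (m : ℕ) :
    #{s : Finset α | #s ≤ m} ≤ (Fintype.card α + 1) ^ m := by
  classical
  have hcover : ({s : Finset α | #s ≤ m} : Finset (Finset α)) =
      (range (m + 1)).biUnion fun k => powersetCard k univ := by
    ext s
    simp
  calc #{s : Finset α | #s ≤ m}
      ≤ ∑ k ∈ range (m + 1), #(powersetCard k (univ : Finset α)) := hcover ▸ card_biUnion_le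
    _ ≤ ∑ k ∈ range (m + 1), Fintype.card α ^ k * 1 ^ (m - k) * m.choose k := by
        refine sum_le_sum fun k hk => ?_
        rw [card_powersetCard, card_univ, one_pow, mul_one]
        exact (Nat.choose_le_pow _ _).trans
          (Nat.le_mul_of_pos_right _ (Nat.choose_pos (Nat.lt_succ_iff.mp (mem_range.mp hk))))
    _ = (Fintype.card α + 1) ^ m := (add_pow _ _ _).symm

theorem card_sym2_fin_add_one_le_sq {n : ℕ} (hn : 2 ≤ n) :
    Fintype.card (Sym2 (Fin n)) + 1 ≤ n ^ 2 := by
  rw [Sym2.card, Fintype.card_fin, Nat.choose_two_right, Nat.add_sub_cancel]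
  have := Nat.div_mul_le_self ((n + 1) * n) 2
  nlinarith

section SpectralSketch

variable {n d : ℕ} {ε : ℝ} {f : (Fin n → ℝ) → ℝ} {G H : SimpleGraph (Fin n)}

def IsSpectralSketch (ε : ℝ) (f : (Fin n → ℝ) → ℝ) (G : SimpleGraph (Fin n)) : Prop :=
  ∀ x, (1 - ε) * lapQuadForm G x ≤ f x ∧ f x ≤ (1 + ε) * lapQuadForm G x

theorem lapQuadForm_eq_dotProduct [DecidableRel G.Adj] (x : Fin n → ℝ) :
    lapQuadForm G x = x ⬝ᵥ G.lapMatrix ℝ *ᵥ x := by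
  unfold lapQuadForm
  congr!

theorem isRegOfDeg_iff [DecidableRel G.Adj] : IsRegOfDeg G d ↔ G.IsRegularOfDegree d := by
  unfold IsRegOfDeg
  congr!

theorem IsSpectralSketch.abs_sub_le (hG : IsSpectralSketch ε f G) (hH : IsSpectralSketch ε f H)
    (x : Fin n → ℝ) :
    |lapQuadForm G x - lapQuadForm H x| ≤ ε * (lapQuadForm G x + lapQuadForm H x) := by
  obtain ⟨hG₁, hG₂⟩ := hG x
  obtain ⟨hH₁, hH₂⟩ := hH x
  rw [abs_le]
  constructor <;> linarith

theorem IsSpectralSketch.card_edgeFinset_sdiff_le [DecidableRel G.Adj] [DecidableRel H.Adj]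
    (hG : IsSpectralSketch ε f G) (hH : IsSpectralSketch ε f H) (hGd : G.IsRegularOfDegree d)
    (hHd : H.IsRegularOfDegree d) :
    (#(G.edgeFinset \ H.edgeFinset) : ℝ) ≤ ε ^ 2 * n * (d ^ 2 + d) := by
  have hquad (x : Fin n → ℝ) : |x ⬝ᵥ (G.lapMatrix ℝ - H.lapMatrix ℝ) *ᵥ x| ≤
      ε * (x ⬝ᵥ (G.lapMatrix ℝ + H.lapMatrix ℝ) *ᵥ x) := by
    simpa only [sub_mulVec, add_mulVec, dotProduct_sub, dotProduct_add, lapQuadForm_eq_dotProduct]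
      using hG.abs_sub_le hH x
  have hB : (G.lapMatrix ℝ - H.lapMatrix ℝ).IsHermitian :=
    (G.isHermitian_lapMatrix ℝ).sub (H.isHermitian_lapMatrix ℝ)
  have hfrob := hB.sum_sq_le_of_abs_dotProduct_mulVec_le hquad
  rw [SimpleGraph.sum_sq_lapMatrix_sub_of_isRegularOfDegree hGd hHd] at hfrob
  have hM := SimpleGraph.sum_sq_lapMatrix_add_le_of_isRegularOfDegree hGd hHd
  rw [Fintype.card_fin] at hM
  linarith [mul_le_mul_of_nonneg_left hM (sq_nonneg ε)]

end SpectralSketch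

open Classical in
theorem SimpleGraph.ncard_le_of_card_edgeFinset_sdiff_le {V : Type*} [Fintype V] [DecidableEq V]
    {S : Set (SimpleGraph V)} (G₀ : SimpleGraph V) {m : ℕ}
    (h : ∀ G ∈ S, #(G.edgeFinset \ G₀.edgeFinset) ≤ m) :
    S.ncard ≤ #{s : Finset (Sym2 V) | #s ≤ m} * 2 ^ #G₀.edgeFinset := by
  set E₀ := G₀.edgeFinset
  have recover (G : SimpleGraph V) :
      G.edgeFinset = (G.edgeFinset \ E₀) ∪ (E₀ \ (E₀ \ G.edgeFinset)) := by
    rw [sdiff_sdiff_right_self, inf_eq_inter, inter_comm, sdiff_union_inter]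
  have hinj : Set.InjOn (fun G => (G.edgeFinset \ E₀, E₀ \ G.edgeFinset)) S := by
    intro G _ H _ hGH
    simp only [Prod.ext_iff] at hGH
    rw [← edgeFinset_inj, recover G, recover H, hGH.1, hGH.2]
  set T := ({s | #s ≤ m} : Finset (Finset (Sym2 V))) ×ˢ E₀.powerset
  calc S.ncard ≤ (T : Set _).ncard :=
        Set.ncard_le_ncard_of_injOn _ (fun G hG => by simpa [T] using h G hG) hinj
    _ = #{s : Finset (Sym2 V) | #s ≤ m} * 2 ^ #E₀ := by
        rw [Set.ncard_coe_finset, card_product, card_powerset]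

theorem sq_pow_mul_two_rpow_le {n d m : ℕ} {ε : ℝ} (hn : 1 ≤ n)
    (hm : (m : ℝ) ≤ ε ^ 2 * n * (d ^ 2 + d)) :
    ((n : ℝ) ^ 2) ^ m * 2 ^ ((d : ℝ) * n / 2) ≤
      2 ^ ((d : ℝ) * n / 2 + 5 * ε ^ 2 * d ^ 2 * n * Real.logb 2 n) := by
  set L := Real.logb 2 n
  have hL : 0 ≤ L := Real.logb_nonneg one_lt_two (by exact_mod_cast hn)
  have h2L : (2 : ℝ) ^ L = n := Real.rpow_logb two_pos (by norm_num) (by positivity)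
  have hd : (d : ℝ) ≤ d ^ 2 := by exact_mod_cast Nat.le_self_pow two_ne_zero d
  have hm' : 2 * (m : ℝ) ≤ 5 * ε ^ 2 * d ^ 2 * n := by
    nlinarith [mul_le_mul_of_nonneg_left hd (by positivity : 0 ≤ ε ^ 2 * n)]
  calc ((n : ℝ) ^ 2) ^ m * 2 ^ ((d : ℝ) * n / 2) = 2 ^ (L * (2 * m : ℕ) + d * n / 2) := by
        rw [Real.rpow_add two_pos, Real.rpow_mul_natCast zero_le_two, h2L, pow_mul]
    _ ≤ 2 ^ ((d : ℝ) * n / 2 + 5 * ε ^ 2 * d ^ 2 * n * L) := by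
        refine Real.rpow_le_rpow_of_exponent_le one_le_two ?_
        push_cast
        nlinarith [mul_le_mul_of_nonneg_right hm' hL]

theorem sketch_count_general (n d : ℕ) (hn : 2 ≤ n) (ε : ℝ) (f : (Fin n → ℝ) → ℝ) :
    ((Set.ncard {G : SimpleGraph (Fin n) | IsRegOfDeg G d ∧
        ∀ x : Fin n → ℝ,
          (1 - ε) * lapQuadForm G x ≤ f x ∧ f x ≤ (1 + ε) * lapQuadForm G x}) : ℝ) ≤
      2 ^ ((d : ℝ) * n / 2 + 5 * ε ^ 2 * d ^ 2 * n * Real.logb 2 n) := by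
  classical
  change ((Set.ncard {G | IsRegOfDeg G d ∧ IsSpectralSketch ε f G}) : ℝ) ≤ _
  obtain hS | ⟨G₀, hG₀d, hG₀f⟩ :=
    Set.eq_empty_or_nonempty {G : SimpleGraph (Fin n) | IsRegOfDeg G d ∧ IsSpectralSketch ε f G}
  · rw [hS, Set.ncard_empty, Nat.cast_zero]
    positivity
  rw [isRegOfDeg_iff] at hG₀d
  set m := ⌊ε ^ 2 * n * (d ^ 2 + d)⌋₊
  have hsdiff : ∀ G ∈ {G | IsRegOfDeg G d ∧ IsSpectralSketch ε f G},
      #(G.edgeFinset \ G₀.edgeFinset) ≤ m := by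
    rintro G ⟨hGd, hGf⟩
    rw [isRegOfDeg_iff] at hGd
    exact Nat.le_floor (hGf.card_edgeFinset_sdiff_le hG₀f hGd hG₀d)
  have hE₀ : (#G₀.edgeFinset : ℝ) = d * n / 2 := by
    have h2 : (2 * #G₀.edgeFinset : ℝ) = n * d := by
      exact_mod_cast Fintype.card_fin n ▸ hG₀d.two_mul_card_edgeFinset
    linarith
  calc _ ≤ (#{s : Finset (Sym2 (Fin n)) | #s ≤ m} * 2 ^ #G₀.edgeFinset : ℝ) := by
        exact_mod_cast SimpleGraph.ncard_le_of_card_edgeFinset_sdiff_le G₀ hsdiff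
    _ ≤ ((n : ℝ) ^ 2) ^ m * 2 ^ ((d : ℝ) * n / 2) := by
        rw [← hE₀, Real.rpow_natCast]
        gcongr
        exact_mod_cast (card_filter_card_le_le_pow m).trans
          (Nat.pow_le_pow_left (card_sym2_fin_add_one_le_sq hn) m)
    _ ≤ _ := sq_pow_mul_two_rpow_le (by omega) (Nat.floor_le (by positivity))

/-- Any fixed function `f : ℝⁿ → ℝ` is an `ε`-spectral sketch of at most
`2^(dn/2 + 5ε²d²n log₂ n)` simple `d`-regular graphs on `n` labelled vertices. -/
theorem sketch_count (n d : ℕ) (hn : 2 ≤ n) (hd : 1 ≤ d) (ε : ℝ) (hε : 0 < ε)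
    (hε' : ε ≤ 1 / 3) (f : (Fin n → ℝ) → ℝ) :
    ((Set.ncard {G : SimpleGraph (Fin n) | IsRegOfDeg G d ∧
        ∀ x : Fin n → ℝ,
          (1 - ε) * lapQuadForm G x ≤ f x ∧ f x ≤ (1 + ε) * lapQuadForm G x}) : ℝ) ≤
      2 ^ ((d : ℝ) * n / 2 + 5 * ε ^ 2 * d ^ 2 * n * Real.logb 2 n) :=
  sketch_count_general n d hn ε f
end

section
/- Let d : ℕ → ℕ be a sequence with d(n) ≥ 1 and d(n)/√n → 0 as n → ∞, and let G_{n,d} denote the set of all simple d-regular graphs on the labelled vertex set {1,…,n} (considering only n with d(n)·n even). Then liminf_{n→∞} (2·ln|G_{n,d(n)}|) / (d(n)·n·ln(n/d(n))) ≥ 1; that is, |G_{n,d}| ≥ exp(d n ln(n/d)/2·(1−o(1))). -/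
open Filter Finset Function Equiv Real Topology

/-!
For even `n = 2m`, take `d` permutations `τ i` of `[m]` that take pairwise different values at
every point. Joining the `j`-th left vertex to the `τ i j`-th right vertex for all `i` gives a
`d`-regular bipartite graph, and a graph arises from at most `d^{dm}` such tuples. The
permutations are chosen one after the other; a new one must avoid at most `d` forbidden values in
every row and every column. Choosing its first `m - 2d` values greedily and completing it by Hall's
theorem leaves at least `(m - d)! / d!` choices, hence
`log |G_{2m,d}| ≥ d log ((m - d)! / d!) - dm log d = dm log (m / d) - O(dm + d² log m)`.

For odd `n` the degree `d` is even. Deleting `d / 2` disjoint edges from a `d`-regular graph on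
`n - 1` vertices and joining a new vertex to their `d` endpoints is at most `2^{d²}`-to-one, which
costs only `O(d²)` in the logarithm.

Once `d ≤ √n / 2`, the error terms are `o(dn log (n / d))`.
-/

theorem prod_range_le_card_of_le_card_snoc {β : Type*} [Fintype β] [DecidableEq β]
    (S : (k : ℕ) → Finset (Fin k → β)) (a : ℕ → ℕ) (n : ℕ) (h₀ : (S 0).Nonempty)
    (hstep : ∀ k < n, ∀ g ∈ S k,
      a k ≤ #{x | (Fin.snoc g x : Fin (k + 1) → β) ∈ S (k + 1)}) :
    ∏ t ∈ range n, a t ≤ #(S n) := by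
  induction n with
  | zero => simpa using h₀
  | succ n ih =>
    calc ∏ t ∈ range (n + 1), a t ≤ #(S n) * a n := by
          rw [prod_range_succ]
          exact Nat.mul_le_mul_right _ (ih fun k hk => hstep k (by omega))
      _ ≤ ∑ g ∈ S n, #{x | (Fin.snoc g x : Fin (n + 1) → β) ∈ S (n + 1)} := by
          rw [← smul_eq_mul, ← sum_const]
          exact sum_le_sum fun g hg => hstep n (by omega) g hg
      _ = #((S n).sigma fun g =>
            ({x | (Fin.snoc g x : Fin (n + 1) → β) ∈ S (n + 1)} : Finset β)) :=
          (card_sigma _ _).symm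
      _ ≤ #(S (n + 1)) := by
          refine card_le_card_of_injOn (fun p => Fin.snoc p.1 p.2) (fun p hp => ?_) ?_
          · simp only [mem_coe, mem_sigma, mem_filter] at hp
            exact hp.2.2
          · rintro ⟨g, x⟩ - ⟨g', x'⟩ - h
            obtain ⟨rfl, rfl⟩ := Fin.snoc_injective2 h
            rfl

theorem descFactorial_le_card_injective_avoiding {β : Type*} [Fintype β] [DecidableEq β]
    (F : ℕ → Finset β) {d : ℕ} (hF : ∀ j, #(F j) ≤ d) (k : ℕ) :
    (Fintype.card β - d).descFactorial k ≤
      #{g : Fin k → β | Injective g ∧ ∀ j : Fin k, g j ∉ F j} := by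
  rw [Nat.descFactorial_eq_prod_range]
  refine prod_range_le_card_of_le_card_snoc
    (fun k => {g : Fin k → β | Injective g ∧ ∀ j : Fin k, g j ∉ F j}) _ k
    ⟨Fin.elim0, mem_filter.2 ⟨mem_univ _, fun a => a.elim0, fun j => j.elim0⟩⟩
    fun k _ g hg => ?_
  simp only [mem_filter, mem_univ, true_and] at hg
  calc Fintype.card β - d - k ≤ #(univ \ (univ.image g ∪ F k)) := by
        rw [card_sdiff_of_subset (subset_univ _), card_univ]
        have := (card_union_le (univ.image g) (F k)).trans
          (add_le_add (card_image_le.trans (card_fin k).le) (hF k))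
        omega
    _ ≤ _ := by
        refine card_le_card fun x hx => ?_
        simp only [Finset.mem_sdiff, Finset.mem_union, Finset.mem_image] at hx
        simp only [mem_filter, mem_univ, true_and, Fin.snoc_injective_iff, Fin.forall_fin_succ']
        simp_all

/-- Hall's condition: a set of at most `d` indices is served by `t i` for any one of its members,
and a larger set reaches every point of `R`. -/
theorem exists_injective_mem_of_le_card {ι β : Type*} [Fintype ι] [DecidableEq β]
    (t : ι → Finset β) (R : Finset β) {d : ℕ} (hι : Fintype.card ι ≤ #R)
    (ht : ∀ i, d ≤ #(t i)) (hR : ∀ y ∈ R, #{i | y ∉ t i} ≤ d) :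
    ∃ f : ι → β, Injective f ∧ ∀ i, f i ∈ t i := by
  classical
  refine (all_card_le_biUnion_card_iff_exists_injective t).1 fun s => ?_
  by_cases hs : #s ≤ d
  · obtain rfl | ⟨i, hi⟩ := s.eq_empty_or_nonempty
    · simp
    · exact hs.trans ((ht i).trans (card_le_card (subset_biUnion_of_mem t hi)))
  · calc #s ≤ #R := (card_le_univ s).trans hι
      _ ≤ _ := card_le_card fun y hy => ?_
    obtain ⟨i, hi, hyi⟩ : ∃ i ∈ s, y ∈ t i := by
      by_contra! h
      exact hs ((card_le_card fun i hi => by simpa using h i hi).trans (hR y hy))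
    exact mem_biUnion.2 ⟨i, hi, hyi⟩

theorem exists_perm_avoiding_extend {k d : ℕ} (F : Fin (k + 2 * d) → Finset (Fin (k + 2 * d)))
    (hrow : ∀ j, #(F j) ≤ d) (hcol : ∀ y, #{j | y ∈ F j} ≤ d)
    (g : Fin k → Fin (k + 2 * d)) (hg : Injective g) (hgF : ∀ j, g j ∉ F (Fin.castAdd _ j)) :
    ∃ σ : Perm (Fin (k + 2 * d)),
      (∀ j, σ j ∉ F j) ∧ ∀ j, σ (Fin.castAdd _ j) = g j := by
  set R : Finset (Fin (k + 2 * d)) := univ \ univ.image g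
  have hR : #R = 2 * d := by
    rw [card_sdiff_of_subset (subset_univ _), card_univ, card_image_of_injective _ hg]
    simp
  obtain ⟨f, hf, hfR⟩ := exists_injective_mem_of_le_card (fun j => R \ F (Fin.natAdd k j)) R
    (d := d) (by simp [hR])
    (fun j => by
      have := le_card_sdiff (F (Fin.natAdd k j)) R
      have := hrow (Fin.natAdd k j)
      omega)
    (fun y hy => (card_le_card_of_injOn (Fin.natAdd k) (fun j hj => by simp_all)
      (Fin.natAdd_injective _ _).injOn).trans (hcol y))
  have hfR' : ∀ j, f j ∈ R ∧ f j ∉ F (Fin.natAdd k j) := fun j => Finset.mem_sdiff.1 (hfR j)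
  have hinj : Injective (Fin.append g f) := by
    refine Fin.append_injective_iff.2 ⟨hg, hf, fun i j h => ?_⟩
    have := (hfR' j).1
    simp [R, ← h] at this
  refine ⟨Equiv.ofBijective _ (Finite.injective_iff_bijective.1 hinj), ?_, fun j => ?_⟩
  · refine (Fin.forall_fin_add _).2 ⟨fun j => ?_, fun j => ?_⟩
    · simpa using hgF j
    · simpa using (hfR' j).2
  · simp

theorem descFactorial_le_card_perm_avoiding {m d : ℕ} (F : Fin m → Finset (Fin m))
    (hmd : 2 * d ≤ m) (hrow : ∀ j, #(F j) ≤ d) (hcol : ∀ y, #{j | y ∈ F j} ≤ d) :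
    (m - d).descFactorial (m - 2 * d) ≤ #{σ : Perm (Fin m) | ∀ j, σ j ∉ F j} := by
  obtain ⟨k, rfl⟩ := Nat.exists_eq_add_of_le' hmd
  let F' : ℕ → Finset (Fin (k + 2 * d)) := fun j =>
    if h : j < k + 2 * d then F ⟨j, h⟩ else ∅
  have hF' : ∀ j : Fin k, F' j = F (Fin.castAdd _ j) := fun j => dif_pos (by omega)
  calc (k + 2 * d - d).descFactorial (k + 2 * d - 2 * d)
      = (Fintype.card (Fin (k + 2 * d)) - d).descFactorial k := by simp
    _ ≤ _ := descFactorial_le_card_injective_avoiding F' (fun j => by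
        unfold F'; split_ifs <;> simp [hrow]) k
    _ ≤ _ := card_le_card_of_surjOn (fun σ j => σ (Fin.castAdd _ j)) fun g hg => by
        simp only [mem_coe, mem_filter, mem_univ, true_and, hF'] at hg
        obtain ⟨σ, hσF, hσg⟩ := exists_perm_avoiding_extend F hrow hcol g hg.1 hg.2
        exact ⟨σ, by simpa using hσF, funext hσg⟩

theorem pow_descFactorial_le_card_perms_injective {m d : ℕ} (hmd : 2 * d ≤ m) :
    (m - d).descFactorial (m - 2 * d) ^ d ≤
      #{τ : Fin d → Perm (Fin m) | ∀ j, Injective fun i => τ i j} := by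
  calc _ = ∏ _t ∈ range d, (m - d).descFactorial (m - 2 * d) := by simp
    _ ≤ _ := prod_range_le_card_of_le_card_snoc
        (fun k => {τ : Fin k → Perm (Fin m) | ∀ j, Injective fun i => τ i j}) _ d
        ⟨Fin.elim0, mem_filter.2 ⟨mem_univ _, fun j a => a.elim0⟩⟩ fun k hk τ hτ => ?_
  simp only [mem_filter, mem_univ, true_and] at hτ
  let F : Fin m → Finset (Fin m) := fun j => univ.image fun i => τ i j
  calc _ ≤ #{σ : Perm (Fin m) | ∀ j, σ j ∉ F j} :=
        descFactorial_le_card_perm_avoiding F hmd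
          (fun j => card_image_le.trans (by simp; omega))
          (fun y => (card_le_card (t := univ.image fun i => (τ i).symm y) fun j hj => by
              simp only [F, mem_filter, mem_image] at hj ⊢
              obtain ⟨-, i, -, rfl⟩ := hj
              exact ⟨i, mem_univ _, by simp⟩).trans
            (card_image_le.trans (by simp; omega)))
    _ ≤ _ := card_le_card fun σ hσ => by
        simp only [F, mem_filter, mem_univ, true_and, mem_image, not_exists] at hσ ⊢
        intro j
        have h : (fun i => Fin.snoc (α := fun _ => Perm (Fin m)) τ σ i j) =
            Fin.snoc (fun i => τ i j) (σ j) := by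
          funext i; cases i using Fin.lastCases <;> simp
        rw [h, Fin.snoc_injective_iff]
        exact ⟨hτ j, fun ⟨i, hi⟩ => hσ j i hi⟩

theorem Set.ncard_le_mul_ncard_of_mapsTo {α β : Type*} {s : Set α} {t : Set β} {f : α → β}
    (hf : Set.MapsTo f s t) {n : ℕ} (hn : ∀ a ∈ s, (s ∩ f ⁻¹' {f a}).ncard ≤ n)
    (hs : s.Finite := by toFinite_tac) (ht : t.Finite := by toFinite_tac) :
    s.ncard ≤ n * t.ncard := by
  classical
  rw [Set.ncard_eq_toFinset_card s hs, Set.ncard_eq_toFinset_card t ht]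
  refine (Finset.card_le_mul_card_image (f := f) _ n fun b hb => ?_).trans
    (Nat.mul_le_mul_left n (Finset.card_le_card fun b hb => ?_))
  all_goals obtain ⟨a, ha, rfl⟩ := Finset.mem_image.1 hb
  · rw [← Set.ncard_coe_finset]
    convert hn a (by simpa using ha) using 2
    ext
    simp
  · simpa using hf (by simpa using ha)

namespace SimpleGraph

/-- `G_{V,d}`; degrees are read off as `ncard` of neighbour sets, so that no decidability or
finiteness instance is involved. -/
def regularGraphs (V : Type*) (d : ℕ) : Set (SimpleGraph V) :=
  {G | ∀ v, (G.neighborSet v).ncard = d}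

variable {V W : Type*}

theorem setOf_isRegOfDeg_eq (n d : ℕ) :
    {G : SimpleGraph (Fin n) | IsRegOfDeg G d} = regularGraphs (Fin n) d := by
  ext G
  classical
  simp only [Set.mem_ofPred_eq, IsRegOfDeg, regularGraphs, IsRegularOfDegree,
    ← card_neighborSet_eq_degree, ← Nat.card_eq_fintype_card, Nat.card_coe_set_eq]

theorem ncard_regularGraphs_congr (e : V ≃ W) (d : ℕ) :
    (regularGraphs V d).ncard = (regularGraphs W d).ncard := by
  rw [← Set.ncard_image_of_injective _ e.simpleGraph.injective,
    e.simpleGraph.image_eq_preimage_symm]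
  congr 1
  ext G
  simp only [Set.mem_preimage, regularGraphs, Set.mem_ofPred_eq, Equiv.symm_simpleGraph,
    Equiv.simpleGraph_apply, Equiv.symm_symm, neighborSet_comap,
    Set.ncard_preimage_of_injective_subset_range e.injective (by simp [e.surjective.range_eq])]
  exact e.forall_congr_left.trans (by simp)

theorem ncard_regularGraphs_le [Fintype V] (d : ℕ) :
    (regularGraphs V d).ncard ≤ Fintype.card V ^ (d * Fintype.card V) := by
  classical
  calc _ ≤ (↑(Fintype.piFinset fun _ : V => powersetCard d (univ : Finset V)) :
        Set (V → Finset V)).ncard := by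
        refine Set.ncard_le_ncard_of_injOn (fun G v => (G.neighborSet v).toFinset)
          (fun G hG => ?_) (fun G _ G' _ h => ?_)
        · simp only [mem_coe, Fintype.mem_piFinset, mem_powersetCard, subset_univ, true_and]
          intro v
          rw [← Set.ncard_eq_toFinset_card', hG v]
        · ext a b
          simpa using congrArg (b ∈ ·) (congrFun h a)
    _ = (Fintype.card V).choose d ^ Fintype.card V := by
        rw [Set.ncard_coe_finset, Fintype.card_piFinset]
        simp
    _ ≤ _ := by
        rw [pow_mul]
        exact Nat.pow_le_pow_left (Nat.choose_le_pow _ _) _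

section permGraph

variable {ι α : Type*}

def permGraph (τ : ι → Perm α) : SimpleGraph (α ⊕ α) where
  Adj
    | .inl j, .inr y | .inr y, .inl j => ∃ i, τ i j = y
    | _, _ => False
  symm := ⟨by rintro (a | a) (b | b) <;> simp⟩
  loopless := ⟨by rintro (a | a) <;> simp⟩

theorem permGraph_adj_inl_inr (τ : ι → Perm α) (j y : α) :
    (permGraph τ).Adj (.inl j) (.inr y) ↔ ∃ i, τ i j = y := Iff.rfl

theorem permGraph_neighborSet_inl (τ : ι → Perm α) (j : α) :
    (permGraph τ).neighborSet (.inl j) = Set.range fun i => .inr (τ i j) := by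
  ext (y | y) <;> simp [permGraph]

theorem permGraph_neighborSet_inr (τ : ι → Perm α) (y : α) :
    (permGraph τ).neighborSet (.inr y) = Set.range fun i => .inl ((τ i).symm y) := by
  ext (j | j) <;> simp [permGraph, eq_symm_apply, eq_comm]

theorem permGraph_mem_regularGraphs {τ : ι → Perm α} (hτ : ∀ j, Injective fun i => τ i j) :
    permGraph τ ∈ regularGraphs (α ⊕ α) (Nat.card ι) := by
  rintro (j | y)
  · rw [permGraph_neighborSet_inl]
    exact Set.ncard_range_of_injective (Sum.inr_injective.comp (hτ j))
  · rw [permGraph_neighborSet_inr]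
    refine Set.ncard_range_of_injective
      (Sum.inl_injective.comp fun i i' h => hτ ((τ i).symm y) ?_)
    simp only [apply_symm_apply]
    rw [h, apply_symm_apply]

end permGraph

theorem pow_descFactorial_le_mul_ncard_regularGraphs {m d : ℕ} (hmd : 2 * d ≤ m) :
    (m - d).descFactorial (m - 2 * d) ^ d ≤
      d ^ (d * m) * (regularGraphs (Fin (2 * m)) d).ncard := by
  rw [← ncard_regularGraphs_congr (finSumFinEquiv.trans (finCongr (two_mul m).symm))]
  refine (pow_descFactorial_le_card_perms_injective hmd).trans ?_
  rw [← Set.ncard_coe_finset]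
  refine Set.ncard_le_mul_ncard_of_mapsTo (f := permGraph)
    (fun τ hτ => by
      have := permGraph_mem_regularGraphs (τ := τ) (by simpa using hτ)
      rwa [Nat.card_fin] at this) fun τ₀ _ => ?_
  -- `τ` is determined by the graph and, for each `(i, j)`, the choice of `τ i j` among the `d`
  -- right neighbours of the `j`-th left vertex.
  calc _ ≤ (↑(Fintype.piFinset fun p : Fin d × Fin m => univ.image fun i => τ₀ i p.2) :
        Set (Fin d × Fin m → Fin m)).ncard := by
        refine Set.ncard_le_ncard_of_injOn (fun τ p => τ p.1 p.2) (fun τ hτ => ?_) ?_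
        · simp only [mem_coe, Fintype.mem_piFinset, mem_image, mem_univ, true_and]
          intro p
          rw [← permGraph_adj_inl_inr, ← hτ.2, permGraph_adj_inl_inr]
          exact ⟨p.1, rfl⟩
        · intro τ _ τ' _ h
          funext i
          exact Equiv.ext fun j => congrFun h (i, j)
    _ ≤ d ^ (d * m) := by
        rw [Set.ncard_coe_finset, Fintype.card_piFinset]
        refine (prod_le_pow_card _ _ d fun p _ => card_image_le.trans (by simp)).trans ?_
        simp

theorem exists_isMatching_ncard_verts [Finite V] {H : SimpleGraph V} {d : ℕ}
    (hH : H ∈ regularGraphs V d) (hdV : d < Nat.card V) {k : ℕ} (hk : 2 * k ≤ d) :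
    ∃ M : H.Subgraph, M.IsMatching ∧ M.verts.ncard = 2 * k := by
  induction k with
  | zero => exact ⟨⊥, fun v hv => hv.elim, by simp⟩
  | succ k ih =>
    obtain ⟨M, hM, hcard⟩ := ih (by omega)
    obtain ⟨u, hu⟩ : ∃ u, u ∉ M.verts := by
      by_contra! h
      rw [Set.eq_univ_of_forall h, Set.ncard_univ] at hcard
      omega
    obtain ⟨w, huw, hw⟩ : ∃ w, H.Adj u w ∧ w ∉ M.verts := by
      by_contra! h
      have := Set.ncard_le_ncard (s := H.neighborSet u) (t := M.verts) h
      rw [hH u] at this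
      omega
    refine ⟨M ⊔ H.subgraphOfAdj huw, hM.sup (.subgraphOfAdj huw) ?_, ?_⟩
    · rw [hM.support_eq_verts, (Subgraph.IsMatching.subgraphOfAdj huw).support_eq_verts,
        subgraphOfAdj_verts]
      simp [hu, hw]
    · rw [Subgraph.verts_sup, subgraphOfAdj_verts, Set.union_insert, Set.union_singleton,
        Set.ncard_insert_of_notMem (by simp [hu, huw.ne]), Set.ncard_insert_of_notMem hw, hcard]
      ring

def attachVertex (H : SimpleGraph V) (M : H.Subgraph) : SimpleGraph (Option V) where
  Adj
    | some a, some b => H.Adj a b ∧ ¬M.Adj a b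
    | none, some b | some b, none => b ∈ M.verts
    | none, none => False
  symm := ⟨by rintro (_ | a) (_ | b) <;> simp [H.adj_comm, M.adj_comm]⟩
  loopless := ⟨by rintro (_ | a) <;> simp⟩

variable {H : SimpleGraph V} {M : H.Subgraph}

theorem attachVertex_adj_some (a b : V) :
    (attachVertex H M).Adj (some a) (some b) ↔ H.Adj a b ∧ ¬M.Adj a b := Iff.rfl

theorem attachVertex_adj_none (b : V) :
    (attachVertex H M).Adj none (some b) ↔ b ∈ M.verts := Iff.rfl

theorem adj_iff_attachVertex_adj_or (a b : V) :
    H.Adj a b ↔ (attachVertex H M).Adj (some a) (some b) ∨ M.Adj a b := by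
  have := @M.adj_sub a b
  rw [attachVertex_adj_some]
  tauto

theorem attachVertex_mem_regularGraphs [Finite V] {d : ℕ} (hH : H ∈ regularGraphs V d)
    (hM : M.IsMatching) (hcard : M.verts.ncard = d) :
    attachVertex H M ∈ regularGraphs (Option V) d := by
  rintro (_ | u)
  · have : (attachVertex H M).neighborSet none = some '' M.verts := by
      ext (_ | b) <;> simp [attachVertex_adj_none]
    rw [this, Set.ncard_image_of_injective _ (Option.some_injective V), hcard]
  by_cases hu : u ∈ M.verts
  · obtain ⟨w, huw, -⟩ := hM hu
    have : (attachVertex H M).neighborSet (some u) =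
        insert none (some '' (H.neighborSet u \ {w})) := by
      ext (_ | b)
      · exact iff_of_true hu (Set.mem_insert _ _)
      · simp only [mem_neighborSet, attachVertex_adj_some, Set.mem_insert_iff, reduceCtorEq,
          Set.mem_image, Set.mem_sdiff, Set.mem_singleton_iff, Option.some.injEq, exists_eq_right,
          false_or]
        exact and_congr_right fun _ => not_congr ⟨(hM.eq_of_adj_left · huw), (· ▸ huw)⟩
    rw [this, Set.ncard_insert_of_notMem (by simp),
      Set.ncard_image_of_injective _ (Option.some_injective V),
      Set.ncard_sdiff_singleton_add_one (show w ∈ H.neighborSet u from M.adj_sub huw), hH u]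
  · have : (attachVertex H M).neighborSet (some u) = some '' H.neighborSet u := by
      ext (_ | b)
      · exact iff_of_false hu (by simp)
      · simp only [mem_neighborSet, attachVertex_adj_some, Set.mem_image, Option.some.injEq,
          exists_eq_right, and_iff_left_iff_imp]
        exact fun _ h => hu (M.edge_vert h)
    rw [this, Set.ncard_image_of_injective _ (Option.some_injective V), hH u]

theorem ncard_regularGraphs_le_mul_ncard_option [Finite V] {d : ℕ} (hd : Even d)
    (hdV : d < Nat.card V) :
    (regularGraphs V d).ncard ≤ 2 ^ (d * d) * (regularGraphs (Option V) d).ncard := by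
  obtain ⟨e, rfl⟩ := hd
  have : ∀ H ∈ regularGraphs V (e + e),
      ∃ M : H.Subgraph, M.IsMatching ∧ M.verts.ncard = e + e :=
    fun H hH => two_mul e ▸ exists_isMatching_ncard_verts hH hdV (by omega)
  choose! M hM hMcard using this
  refine Set.ncard_le_mul_ncard_of_mapsTo (f := fun H => attachVertex H (M H))
    (fun H hH => attachVertex_mem_regularGraphs hH (hM H hH) (hMcard H hH)) fun H₀ hH₀ => ?_
  -- `H` is recovered from its image and the edges of `M H`, which join neighbours of `none`.
  let P : Set V := some ⁻¹' (attachVertex H₀ (M H₀)).neighborSet none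
  have hP : P.ncard = e + e := by
    rw [Set.ncard_preimage_of_injective_subset_range (Option.some_injective V),
      attachVertex_mem_regularGraphs hH₀ (hM H₀ hH₀) (hMcard H₀ hH₀) none]
    rintro (_ | v) h
    · exact ((attachVertex H₀ (M H₀)).loopless.irrefl none h).elim
    · exact ⟨v, rfl⟩
  calc _ ≤ (𝒫 (P ×ˢ P)).ncard := by
        refine Set.ncard_le_ncard_of_injOn (fun H => {p : V × V | (M H).Adj p.1 p.2})
          (fun H hH p hp => ?_) (fun H hH H' hH' h => ?_)
        · have hGH : attachVertex H (M H) = attachVertex H₀ (M H₀) := hH.2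
          simp only [P, Set.mem_prod, Set.mem_preimage, mem_neighborSet, ← hGH]
          exact ⟨(M H).edge_vert hp, (M H).edge_vert hp.symm⟩
        · have hGH : attachVertex H (M H) = attachVertex H' (M H') := hH.2.trans hH'.2.symm
          ext a b
          rw [adj_iff_attachVertex_adj_or (M := M H), adj_iff_attachVertex_adj_or (M := M H'),
            hGH]
          exact or_congr_right (Set.ext_iff.1 h (a, b))
    _ = 2 ^ ((e + e) * (e + e)) := by rw [Set.ncard_powerset, Set.ncard_prod, hP]

end SimpleGraph

theorem sub_le_log_descFactorial {n k : ℕ} (hk : k ≤ n) :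
    n * log n - n - (n - k : ℕ) * log (n - k : ℕ) ≤ log (n.descFactorial k) := by
  have hlow : n * log n - n ≤ log n.factorial := by
    rcases Nat.eq_zero_or_pos n with rfl | hn
    · simp
    have := Stirling.le_log_factorial_stirling hn.ne'
    have : 0 ≤ log n := log_natCast_nonneg n
    have : 0 ≤ log (2 * π) := log_nonneg (by linarith [pi_gt_three])
    linarith
  have hup : log (n - k).factorial ≤ (n - k : ℕ) * log (n - k : ℕ) := by
    rw [← log_pow]
    exact log_le_log (by positivity) (by exact_mod_cast Nat.factorial_le_pow _)
  have h := congrArg (fun x : ℕ => log x) (Nat.factorial_mul_descFactorial hk)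
  simp only [Nat.cast_mul] at h
  rw [log_mul (by positivity) (by exact_mod_cast (Nat.descFactorial_pos.2 hk).ne')] at h
  linarith

theorem log_le_log_add_log_of_le_mul {a b c : ℕ} (hc : 0 < c) (h : a ≤ c * b) :
    log a ≤ log c + log b := by
  obtain rfl | ha := Nat.eq_zero_or_pos a
  · rw [Nat.cast_zero, log_zero]
    positivity
  have hb : 0 < b := Nat.pos_of_mul_pos_left (ha.trans_le h)
  rw [← log_mul (by positivity) (by positivity)]
  exact log_le_log (by positivity) (by exact_mod_cast h)

open SimpleGraph

theorem le_two_mul_log_ncard_regularGraphs_of_eq_two_mul {n m d : ℕ} (hn : n = 2 * m)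
    (hd : 1 ≤ d) (hmd : 2 * d ≤ m) :
    d * n * log (n / d) - 4 * (d * n + d ^ 2 * log n) ≤
      2 * log (regularGraphs (Fin n) d).ncard := by
  subst hn
  have hlogN := log_le_log_add_log_of_le_mul (Nat.pos_of_ne_zero (by positivity))
    (pow_descFactorial_le_mul_ncard_regularGraphs hmd)
  simp only [Nat.cast_pow, log_pow, Nat.cast_mul] at hlogN
  have hlogP := sub_le_log_descFactorial (n := m - d) (k := m - 2 * d) (by omega)
  rw [show m - d - (m - 2 * d) = d by omega, Nat.cast_sub (by omega)] at hlogP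
  have hm : (0 : ℝ) < m := by exact_mod_cast (by omega : 0 < m)
  have hd' : (1 : ℝ) ≤ d := by exact_mod_cast hd
  have hmd' : (2 * d : ℝ) ≤ m := by exact_mod_cast hmd
  have hlog_sub : log m - log 2 ≤ log (m - d) := by
    rw [← log_div hm.ne' two_ne_zero]
    exact log_le_log (by positivity) (by linarith)
  have hlog_d : log d ≤ log m := log_le_log (by positivity) (by linarith)
  have hlog_two : log 2 ≤ 1 := by linarith [log_two_lt_d9]
  have hd0 : (0 : ℝ) ≤ d := by positivity
  push_cast
  rw [log_div (by positivity) (by positivity), log_mul two_ne_zero hm.ne']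
  linarith [mul_le_mul_of_nonneg_left
      (mul_le_mul_of_nonneg_left hlog_sub (by linarith : (0 : ℝ) ≤ m - d)) hd0,
    mul_le_mul_of_nonneg_left (mul_le_mul_of_nonneg_left hlog_d hd0) hd0,
    mul_le_mul_of_nonneg_left hlogP hd0,
    mul_le_of_le_one_right (by positivity : (0 : ℝ) ≤ d * m) hlog_two,
    (by positivity : (0 : ℝ) ≤ d * d * log 2), (by positivity : (0 : ℝ) ≤ d * m),
    (by positivity : (0 : ℝ) ≤ d * d)]

theorem le_two_mul_log_ncard_regularGraphs_of_eq_two_mul_add_one {n m d : ℕ}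
    (hn : n = 2 * m + 1) (hd : 1 ≤ d) (hmd : 2 * d ≤ m) (hde : Even d) :
    d * n * log (n / d) - 6 * (d * n + d ^ 2 * log n) ≤
      2 * log (regularGraphs (Fin n) d).ncard := by
  subst hn
  have heven := le_two_mul_log_ncard_regularGraphs_of_eq_two_mul rfl hd hmd
  have hcount : (regularGraphs (Fin (2 * m)) d).ncard ≤
      2 ^ (d * d) * (regularGraphs (Fin (2 * m + 1)) d).ncard := by
    rw [← ncard_regularGraphs_congr (finSuccEquiv (2 * m)).symm]
    exact ncard_regularGraphs_le_mul_ncard_option hde (by simp; omega)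
  have hlog := log_le_log_add_log_of_le_mul (by positivity) hcount
  simp only [Nat.cast_pow, log_pow, Nat.cast_mul, Nat.cast_ofNat] at hlog
  have hm : (0 : ℝ) < 2 * m := by exact_mod_cast (by omega : 0 < 2 * m)
  have hd' : (1 : ℝ) ≤ d := by exact_mod_cast hd
  have hn : (4 : ℝ) ≤ 2 * m + 1 := by exact_mod_cast (by omega : 4 ≤ 2 * m + 1)
  have hlog_succ : 2 * m * (log (2 * m + 1) - log (2 * m)) ≤ 1 := by
    rw [← log_div (by positivity) hm.ne']
    have := log_le_sub_one_of_pos (x := (2 * m + 1) / (2 * m)) (by positivity)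
    rw [div_sub_one hm.ne', add_sub_cancel_left] at this
    calc (2 * m : ℝ) * log ((2 * m + 1) / (2 * m)) ≤ 2 * m * (1 / (2 * m)) :=
          mul_le_mul_of_nonneg_left this hm.le
      _ = 1 := mul_one_div_cancel hm.ne'
  have hlog_four : 2 * log 2 ≤ log (2 * m + 1) := by
    rw [← log_rpow two_pos]
    exact log_le_log (by positivity) (by norm_num; linarith)
  have hlog_mono : log (2 * m) ≤ log (2 * m + 1) := log_le_log hm (by linarith)
  have hd0 : (0 : ℝ) ≤ d := by positivity
  push_cast at heven ⊢
  rw [log_div (by positivity) (by positivity)] at heven ⊢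
  linarith [mul_le_mul_of_nonneg_left hlog_succ hd0,
    mul_le_mul_of_nonneg_right (le_mul_of_one_le_left hd0 hd') 
      (log_nonneg (by linarith : (1 : ℝ) ≤ 2 * m + 1)),
    mul_le_mul_of_nonneg_left hlog_mono (by positivity : (0 : ℝ) ≤ d * d),
    mul_le_mul_of_nonneg_left hlog_four (by positivity : (0 : ℝ) ≤ d * d),
    mul_nonneg hd0 (log_nonneg hd'), (by positivity : (0 : ℝ) ≤ d * m)]

theorem le_two_mul_log_ncard_regularGraphs {n d : ℕ} (hd : 1 ≤ d) (hdn : 4 * d ≤ n)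
    (heven : Even (d * n)) :
    d * n * log (n / d) - 6 * (d * n + d ^ 2 * log n) ≤
      2 * log (regularGraphs (Fin n) d).ncard := by
  obtain ⟨m, rfl | rfl⟩ := Nat.even_or_odd' n
  · refine le_trans ?_ (le_two_mul_log_ncard_regularGraphs_of_eq_two_mul rfl hd (by omega))
    have : (0 : ℝ) ≤ d * (2 * m : ℕ) + d ^ 2 * log (2 * m : ℕ) := by positivity
    linarith
  · refine le_two_mul_log_ncard_regularGraphs_of_eq_two_mul_add_one rfl hd (by omega) ?_
    exact (Nat.even_mul.1 heven).resolve_right (Nat.not_even_iff_odd.2 (odd_two_mul_add_one m))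

theorem log_le_two_mul_log_div {n d : ℝ} (hd : 1 ≤ d) (hdn : d ≤ √n) :
    log n ≤ 2 * log (n / d) := by
  have hn : 0 < n := sqrt_pos.1 (by linarith)
  have := log_le_log (by linarith) hdn
  rw [log_sqrt hn.le] at this
  rw [log_div hn.ne' (by positivity)]
  linarith

theorem two_mul_log_ncard_regularGraphs_div_le {n d : ℕ} (hd : 1 ≤ d)
    (hdn : (d : ℝ) ≤ √n) :
    2 * log (regularGraphs (Fin n) d).ncard / (d * n * log (n / d)) ≤ 4 := by
  have hlog := log_le_two_mul_log_div (by exact_mod_cast hd) hdn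
  have hlog_n : 0 ≤ log n := log_natCast_nonneg n
  have hN : log (regularGraphs (Fin n) d).ncard ≤ d * n * log n := by
    obtain h | h := Nat.eq_zero_or_pos (regularGraphs (Fin n) d).ncard
    · rw [h, Nat.cast_zero, log_zero]
      positivity
    have hle : (regularGraphs (Fin n) d).ncard ≤ n ^ (d * n) := by
      simpa using ncard_regularGraphs_le (V := Fin n) d
    calc log (regularGraphs (Fin n) d).ncard ≤ log ((n : ℝ) ^ (d * n)) :=
          log_le_log (by positivity) (by exact_mod_cast hle)
      _ = d * n * log n := by rw [log_pow]; push_cast; ring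
  refine div_le_of_le_mul₀ (mul_nonneg (by positivity) (by linarith)) (by norm_num) ?_
  linarith [mul_le_mul_of_nonneg_left hlog (by positivity : (0 : ℝ) ≤ d * n)]

theorem one_sub_le_two_mul_log_ncard_regularGraphs_div {n d : ℕ} (hd : 1 ≤ d) (hn : 4 ≤ n)
    (hdn : (d : ℝ) ≤ √n / 2) (heven : Even (d * n)) :
    1 - 12 / log n - 6 / √n ≤
      2 * log (regularGraphs (Fin n) d).ncard / (d * n * log (n / d)) := by
  have hn' : (4 : ℝ) ≤ n := by exact_mod_cast hn
  have hd' : (1 : ℝ) ≤ d := by exact_mod_cast hd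
  have hsqrt : 2 ≤ √n := (le_sqrt zero_le_two (by linarith)).2 (by norm_num; linarith)
  have hsq : √n * √n = n := mul_self_sqrt (by linarith)
  have h4d : 4 * d ≤ n := by
    have : (4 * d : ℝ) ≤ n := by nlinarith
    exact_mod_cast this
  have hlow := le_two_mul_log_ncard_regularGraphs hd h4d heven
  have hlog := log_le_two_mul_log_div hd' (by linarith : (d : ℝ) ≤ √n)
  have hlog_n : 0 < log n := log_pos (by linarith)
  have hD : 0 < d * n * log (n / d) := mul_pos (by positivity) (by linarith)
  have hlinear : 6 * (d * n) ≤ 12 / log n * (d * n * log (n / d)) := by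
    rw [div_mul_eq_mul_div, le_div_iff₀ hlog_n]
    linarith [mul_le_mul_of_nonneg_left hlog (by positivity : (0 : ℝ) ≤ 6 * (d * n))]
  have hquadratic : 6 * (d ^ 2 * log n) ≤ 6 / √n * (d * n * log (n / d)) := by
    rw [div_mul_eq_mul_div, le_div_iff₀ (by linarith)]
    have hdsqrt : d * √n ≤ n / 2 := by nlinarith
    calc 6 * (d ^ 2 * log n) * √n = 6 * d * (d * √n) * log n := by ring
      _ ≤ 6 * d * (n / 2) * (2 * log (n / d)) := by gcongr
      _ = 6 * (d * n * log (n / d)) := by ring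
  rw [le_div_iff₀ hD]
  linarith

/-- **Counting regular graphs (McKay–Wormald).** If `d(n) ≥ 1` and `d(n)/√n → 0`, then,
along the natural numbers `n` with `d(n)·n` even, the number of simple `d(n)`-regular graphs
on `n` labelled vertices satisfies `|G_{n,d}| ≥ exp(d n ln(n/d)/2·(1-o(1)))`, i.e.
`liminf 2 ln|G_{n,d(n)}| / (d(n)·n·ln(n/d(n))) ≥ 1`. -/
theorem count_regular_graphs (d : ℕ → ℕ) (hd : ∀ n, 1 ≤ d n)
    (hdn : Tendsto (fun n : ℕ => (d n : ℝ) / Real.sqrt n) atTop (nhds 0)) :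
    1 ≤ liminf (fun n : ℕ =>
        2 * Real.log ((Set.ncard {G : SimpleGraph (Fin n) | IsRegOfDeg G (d n)}) : ℝ) /
          ((d n : ℝ) * n * Real.log ((n : ℝ) / (d n : ℝ))))
      (atTop ⊓ 𝓟 {n : ℕ | Even (d n * n)}) := by
  simp_rw [setOf_isRegOfDeg_eq]
  have : (atTop ⊓ 𝓟 {n : ℕ | Even (d n * n)}).NeBot := by
    rw [← frequently_mem_iff_neBot, frequently_atTop]
    exact fun a => ⟨2 * a, by omega, d (2 * a) * a, by ring⟩
  have hsmall : ∀ᶠ n : ℕ in atTop, (d n : ℝ) ≤ √n / 2 := by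
    filter_upwards [hdn.eventually (gt_mem_nhds one_half_pos), eventually_ge_atTop 1] with n h hn
    rw [div_lt_iff₀ (sqrt_pos.2 (by exact_mod_cast hn))] at h
    linarith
  have hg : Tendsto (fun n : ℕ => 1 - 12 / log n - 6 / √n) atTop (𝓝 1) := by
    have hlog := tendsto_log_atTop.comp (tendsto_natCast_atTop_atTop (R := ℝ))
    have hsqrt := tendsto_sqrt_atTop.comp (tendsto_natCast_atTop_atTop (R := ℝ))
    simpa using ((hlog.const_div_atTop 12).const_sub 1).sub (hsqrt.const_div_atTop 6)
  have hg' := hg.mono_left (inf_le_left (b := 𝓟 {n : ℕ | Even (d n * n)}))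
  -- A real `liminf` is junk unless the sequence is cobounded; `|G_{n,d}| ≤ n^{dn}` gives the
  -- bound `4`.
  calc (1 : ℝ) = liminf (fun n : ℕ => 1 - 12 / log n - 6 / √n) _ := hg'.liminf_eq.symm
    _ ≤ _ := liminf_le_liminf ?_ hg'.isBoundedUnder_ge
        (isCoboundedUnder_ge_of_eventually_le (x := 4) _ ?_)
  · filter_upwards [inf_le_left (a := atTop) (hsmall.and (eventually_ge_atTop 4)),
      mem_inf_of_right (mem_principal_self _)] with n ⟨hsmall, hn⟩ heven
    exact one_sub_le_two_mul_log_ncard_regularGraphs_div (hd n) hn hsmall heven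
  · filter_upwards [inf_le_left (a := atTop) hsmall] with n hsmall
    exact two_mul_log_ncard_regularGraphs_div_le (hd n) (by linarith [sqrt_nonneg (n : ℝ)])
end

section
/- Let G and H be simple d-regular bipartite graphs on the same vertex set of n vertices with the same bipartition L ∪ R, and let ε > 0. If for every x ∈ {−1,1}^n we have (1−ε)·xᵀL_G x ≤ xᵀL_H x ≤ (1+ε)·xᵀL_G x, then the number of common edges |E(G) ∩ E(H)| is at least (dn/2)·(1 − 3√d·ε). -/
open Matrix

/-- `G` is bipartite with bipartition `L ∪ Lᶜ`: every edge has one endpoint in `L` and one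
outside `L`. -/
def IsBipartiteWith {n : ℕ} (G : SimpleGraph (Fin n)) (L : Set (Fin n)) : Prop :=
  ∀ u v, G.Adj u v → (u ∈ L ↔ v ∉ L)

namespace CutRigidityAux

open Finset

variable {n : ℕ}

def sgn (σ : Fin n → Bool) (j : Fin n) : ℝ := if σ j then 1 else -1
lemma sgn_mul_self (σ : Fin n → Bool) (j : Fin n) : sgn σ j * sgn σ j = 1 := by
  unfold sgn; split <;> norm_num
lemma sgn_update_self (σ : Fin n → Bool) (j : Fin n) :
    sgn (Function.update σ j (!σ j)) j = - sgn σ j := by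
  unfold sgn; rcases Bool.eq_false_or_eq_true (σ j) with h | h <;> simp [h]
lemma sgn_update_ne (σ : Fin n → Bool) (j i : Fin n) (h : i ≠ j) (b : Bool) :
    sgn (Function.update σ j b) i = sgn σ i := by
  unfold sgn; rw [Function.update_of_ne h]
lemma sum_flip_eq_zero (j : Fin n) (f : (Fin n → Bool) → ℝ)
    (hf : ∀ σ, f (Function.update σ j (!σ j)) = - f σ) :
    ∑ σ : Fin n → Bool, f σ = 0 := by
  classical
  have hinv : Function.Involutive (fun σ : Fin n → Bool => Function.update σ j (!σ j)) := by
    intro σ; funext i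
    by_cases hi : i = j
    · subst hi; simp
    · simp [Function.update_of_ne hi]
  have h1 : ∑ σ : Fin n → Bool, f σ =
      ∑ σ : Fin n → Bool, f (Function.update σ j (!σ j)) :=
    (Equiv.sum_comp hinv.toPerm f).symm
  have h2 : ∑ σ : Fin n → Bool, f (Function.update σ j (!σ j)) =
      - ∑ σ : Fin n → Bool, f σ := by
    rw [← Finset.sum_neg_distrib]
    exact Finset.sum_congr rfl fun σ _ => hf σ
  linarith [h1, h2]
lemma sum_one_eq : ∑ _σ : Fin n → Bool, (1 : ℝ) = 2 ^ n := by
  simp [Finset.card_univ]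
lemma sum_sgn_mul_sgn (j j' : Fin n) :
    ∑ σ : Fin n → Bool, sgn σ j * sgn σ j' = if j = j' then (2 : ℝ) ^ n else 0 := by
  split
  · next h => subst h; rw [← sum_one_eq]; exact Finset.sum_congr rfl fun σ _ => sgn_mul_self σ j
  · next h =>
      apply sum_flip_eq_zero j
      intro σ
      rw [sgn_update_self, sgn_update_ne σ j j' (Ne.symm h)]
      ring

lemma sgn4_eq_one (σ : Fin n → Bool) (a b : Fin n) :
    sgn σ a * sgn σ b * (sgn σ a * sgn σ b) = 1 := by
  calc sgn σ a * sgn σ b * (sgn σ a * sgn σ b)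
      = (sgn σ a * sgn σ a) * (sgn σ b * sgn σ b) := by ring
    _ = 1 := by rw [sgn_mul_self, sgn_mul_self]; norm_num

lemma sgn4_eq_one' (σ : Fin n → Bool) (a b : Fin n) :
    sgn σ a * sgn σ b * (sgn σ b * sgn σ a) = 1 := by
  calc sgn σ a * sgn σ b * (sgn σ b * sgn σ a)
      = (sgn σ a * sgn σ a) * (sgn σ b * sgn σ b) := by ring
    _ = 1 := by rw [sgn_mul_self, sgn_mul_self]; norm_num

lemma sum_sgn4 (j j' l l' : Fin n) (hjj : j ≠ j') (hll : l ≠ l') :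
    ∑ σ : Fin n → Bool, sgn σ j * sgn σ j' * (sgn σ l * sgn σ l') =
      if (j = l ∧ j' = l') ∨ (j = l' ∧ j' = l) then (2 : ℝ) ^ n else 0 := by
  split
  · next h =>
    rw [← sum_one_eq]
    refine Finset.sum_congr rfl fun σ _ => ?_
    rcases h with ⟨h1, h2⟩ | ⟨h1, h2⟩ <;> subst h1 <;> subst h2
    · exact sgn4_eq_one σ _ _
    · exact sgn4_eq_one' σ _ _
  · next h =>
    by_cases hjl : j = l
    · subst hjl
      have hj'l' : j' ≠ l' := fun he => h (Or.inl ⟨rfl, he⟩)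
      apply sum_flip_eq_zero j'
      intro σ
      simp only [sgn_update_self, sgn_update_ne σ j' j hjj (!σ j'),
        sgn_update_ne σ j' l' (Ne.symm hj'l') (!σ j')]
      ring
    · by_cases hjl' : j = l'
      · subst hjl'
        have hj'l : j' ≠ l := fun he => h (Or.inr ⟨rfl, he⟩)
        apply sum_flip_eq_zero j'
        intro σ
        simp only [sgn_update_self, sgn_update_ne σ j' j hjj (!σ j'),
          sgn_update_ne σ j' l (Ne.symm hj'l) (!σ j')]
        ring
      · apply sum_flip_eq_zero j
        intro σ
        simp only [sgn_update_self, sgn_update_ne σ j j' (Ne.symm hjj) (!σ j),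
          sgn_update_ne σ j l (Ne.symm hjl) (!σ j), sgn_update_ne σ j l' (Ne.symm hjl') (!σ j)]
        ring

lemma sum_const_hyper (x : ℝ) : ∑ _σ : Fin n → Bool, x = 2 ^ n * x := by
  rw [Finset.sum_const, nsmul_eq_mul]
  norm_num [Finset.card_univ]

/-- fourth moment -/
lemma sum_quad_row (c : Fin n → ℝ) :
    ∑ σ : Fin n → Bool, (∑ j, c j * sgn σ j) ^ 4 ≤ 3 * 2 ^ n * (∑ j, (c j) ^ 2) ^ 2 := by
  classical
  set N : ℝ := ∑ j, (c j) ^ 2 with hN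
  set g : Fin n × Fin n → (Fin n → Bool) → ℝ :=
    fun p σ => if p.1 = p.2 then 0 else (c p.1 * c p.2) * (sgn σ p.1 * sgn σ p.2) with hg
  set q : (Fin n → Bool) → ℝ := fun σ => ∑ p : Fin n × Fin n, g p σ with hq
  have hsplit : ∀ σ : Fin n → Bool, (∑ j, c j * sgn σ j) ^ 2 = N + q σ := by
    intro σ
    have e1 : (∑ j, c j * sgn σ j) ^ 2
        = ∑ p : Fin n × Fin n, (c p.1 * c p.2) * (sgn σ p.1 * sgn σ p.2) := by
      rw [sq, Finset.sum_mul_sum, Fintype.sum_prod_type]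
      exact Finset.sum_congr rfl fun j _ => Finset.sum_congr rfl fun j' _ => by ring
    have e2 : ∀ p : Fin n × Fin n, (c p.1 * c p.2) * (sgn σ p.1 * sgn σ p.2)
        = (if p.1 = p.2 then (c p.1 * c p.2) * (sgn σ p.1 * sgn σ p.2) else 0) + g p σ := by
      intro p; simp only [hg]; split_ifs <;> ring
    have e3 : ∑ p : Fin n × Fin n,
        (if p.1 = p.2 then (c p.1 * c p.2) * (sgn σ p.1 * sgn σ p.2) else 0) = N := by
      rw [Fintype.sum_prod_type]
      have h4 : ∀ j : Fin n, (∑ j' : Fin n,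
          if j = j' then (c j * c j') * (sgn σ j * sgn σ j') else 0) = (c j)^2 := by
        intro j
        rw [Finset.sum_ite_eq (Finset.univ) j
          (fun j' => (c j * c j') * (sgn σ j * sgn σ j'))]
        simp [sgn_mul_self σ j, sq]
      rw [Finset.sum_congr rfl fun j _ => h4 j]
    rw [e1, Finset.sum_congr rfl fun p _ => e2 p, Finset.sum_add_distrib, e3]
  have hq0 : ∑ σ : Fin n → Bool, q σ = 0 := by
    simp only [hq]
    rw [Finset.sum_comm]
    refine Finset.sum_eq_zero fun p _ => ?_
    simp only [hg]
    by_cases hp : p.1 = p.2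
    · simp [hp]
    · simp only [if_neg hp]
      rw [← Finset.mul_sum, sum_sgn_mul_sgn]
      simp [hp]
  have hIb : ∀ p p' : Fin n × Fin n,
      (∑ σ : Fin n → Bool, g p σ * g p' σ)
        ≤ (if p' = p then 2 ^ n * ((c p.1)^2 * (c p.2)^2) else 0)
          + (if p' = p.swap then 2 ^ n * ((c p.1)^2 * (c p.2)^2) else 0) := by
    intro p p'
    have hrhs1 : (0:ℝ) ≤ (if p' = p then 2 ^ n * ((c p.1)^2 * (c p.2)^2) else 0) := by
      split <;> positivity
    have hrhs2 : (0:ℝ) ≤ (if p' = p.swap then 2 ^ n * ((c p.1)^2 * (c p.2)^2) else 0) := by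
      split <;> positivity
    by_cases hp : p.1 = p.2
    · simp only [hg, if_pos hp, zero_mul]
      rw [Finset.sum_const, smul_zero]
      linarith
    · by_cases hp' : p'.1 = p'.2
      · simp only [hg, if_pos hp']
        have : ∀ σ : Fin n → Bool,
            (if p.1 = p.2 then (0:ℝ) else (c p.1 * c p.2) * (sgn σ p.1 * sgn σ p.2)) * 0 = 0 :=
          fun σ => mul_zero _
        rw [Finset.sum_congr rfl fun σ _ => this σ, Finset.sum_const, smul_zero]
        linarith
      · have e : ∑ σ : Fin n → Bool, g p σ * g p' σ
            = (c p.1 * c p.2 * (c p'.1 * c p'.2)) *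
              ∑ σ : Fin n → Bool, sgn σ p.1 * sgn σ p.2 * (sgn σ p'.1 * sgn σ p'.2) := by
          rw [Finset.mul_sum]
          refine Finset.sum_congr rfl fun σ _ => ?_
          simp only [hg, if_neg hp, if_neg hp']
          ring
        rw [e, sum_sgn4 p.1 p.2 p'.1 p'.2 hp hp']
        by_cases hm : (p.1 = p'.1 ∧ p.2 = p'.2) ∨ (p.1 = p'.2 ∧ p.2 = p'.1)
        · rw [if_pos hm]
          rcases hm with ⟨h1, h2⟩ | ⟨h1, h2⟩
          · have hpp : p' = p := Prod.ext h1.symm h2.symm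
            rw [if_pos hpp, ← h1, ← h2]
            have : c p.1 * c p.2 * (c p.1 * c p.2) * 2 ^ n
                = 2 ^ n * ((c p.1)^2 * (c p.2)^2) := by ring
            rw [this]
            linarith
          · have hpp : p' = p.swap := Prod.ext h2.symm h1.symm
            rw [if_pos hpp, ← h1, ← h2]
            have : c p.1 * c p.2 * (c p.2 * c p.1) * 2 ^ n
                = 2 ^ n * ((c p.1)^2 * (c p.2)^2) := by ring
            rw [this]
            linarith
        · rw [if_neg hm, mul_zero]
          linarith
  have hq2 : ∑ σ : Fin n → Bool, (q σ) ^ 2 ≤ 2 * 2 ^ n * N ^ 2 := by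
    have e1 : ∀ σ : Fin n → Bool, (q σ) ^ 2
        = ∑ p : Fin n × Fin n, ∑ p' : Fin n × Fin n, g p σ * g p' σ := by
      intro σ
      simp only [hq]
      rw [sq, Finset.sum_mul_sum]
    calc ∑ σ : Fin n → Bool, (q σ) ^ 2
        = ∑ p : Fin n × Fin n, ∑ p' : Fin n × Fin n, ∑ σ : Fin n → Bool, g p σ * g p' σ := by
          rw [Finset.sum_congr rfl fun σ _ => e1 σ, Finset.sum_comm]
          refine Finset.sum_congr rfl fun p _ => Finset.sum_comm
      _ ≤ ∑ p : Fin n × Fin n, ∑ p' : Fin n × Fin n,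
            ((if p' = p then 2 ^ n * ((c p.1)^2 * (c p.2)^2) else 0)
          + (if p' = p.swap then 2 ^ n * ((c p.1)^2 * (c p.2)^2) else 0)) := by
          refine Finset.sum_le_sum fun p _ => Finset.sum_le_sum fun p' _ => hIb p p'
      _ = ∑ p : Fin n × Fin n, 2 * 2 ^ n * ((c p.1)^2 * (c p.2)^2) := by
          refine Finset.sum_congr rfl fun p _ => ?_
          rw [Finset.sum_add_distrib,
            Finset.sum_ite_eq' Finset.univ p (fun _ => 2 ^ n * ((c p.1)^2 * (c p.2)^2)),
            Finset.sum_ite_eq' Finset.univ p.swap (fun _ => 2 ^ n * ((c p.1)^2 * (c p.2)^2))]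
          simp only [Finset.mem_univ, if_pos]
          ring
      _ = 2 * 2 ^ n * N ^ 2 := by
          rw [← Finset.mul_sum, hN, sq, Finset.sum_mul_sum, Fintype.sum_prod_type]
  have key : ∀ σ : Fin n → Bool, (∑ j, c j * sgn σ j) ^ 4
      = N ^ 2 + 2 * N * q σ + (q σ)^2 := by
    intro σ
    have : (∑ j, c j * sgn σ j) ^ 4 = ((∑ j, c j * sgn σ j) ^ 2) ^ 2 := by ring
    rw [this, hsplit σ]
    ring
  rw [Finset.sum_congr rfl fun σ _ => key σ, Finset.sum_add_distrib, Finset.sum_add_distrib,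
    sum_const_hyper (N^2), ← Finset.mul_sum, hq0, mul_zero]
  linarith
/-- second moment -/
lemma sum_sq_row (c : Fin n → ℝ) :
    ∑ σ : Fin n → Bool, (∑ j, c j * sgn σ j) ^ 2 = 2 ^ n * ∑ j, (c j) ^ 2 := by
  classical
  have expand : ∀ σ : Fin n → Bool, (∑ j, c j * sgn σ j) ^ 2
      = ∑ j, ∑ j', (c j * c j') * (sgn σ j * sgn σ j') := by
    intro σ
    rw [sq, Finset.sum_mul_sum]
    exact Finset.sum_congr rfl fun j _ => Finset.sum_congr rfl fun j' _ => by ring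
  calc ∑ σ : Fin n → Bool, (∑ j, c j * sgn σ j) ^ 2
      = ∑ σ : Fin n → Bool, ∑ j, ∑ j', (c j * c j') * (sgn σ j * sgn σ j') :=
        Finset.sum_congr rfl fun σ _ => expand σ
    _ = ∑ j, ∑ j', (c j * c j') * ∑ σ : Fin n → Bool, sgn σ j * sgn σ j' := by
        rw [Finset.sum_comm]
        refine Finset.sum_congr rfl fun j _ => ?_
        rw [Finset.sum_comm]
        refine Finset.sum_congr rfl fun j' _ => ?_
        rw [Finset.mul_sum]
    _ = ∑ j, ∑ j', (c j * c j') * (if j = j' then (2:ℝ)^n else 0) := by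
        refine Finset.sum_congr rfl fun j _ => Finset.sum_congr rfl fun j' _ => ?_
        rw [sum_sgn_mul_sgn]
    _ = ∑ j, (c j * c j) * (2:ℝ)^n := by
        refine Finset.sum_congr rfl fun j _ => ?_
        rw [Finset.sum_eq_single j]
        · simp
        · intro j' _ hj'; simp [Ne.symm hj']
        · intro hj; exact absurd (Finset.mem_univ j) hj
    _ = 2 ^ n * ∑ j, (c j) ^ 2 := by
        rw [Finset.mul_sum]
        exact Finset.sum_congr rfl fun j _ => by ring


/-- Khintchine-type lower bound on the first moment of a Rademacher sum. -/
lemma khintchine_row (c : Fin n → ℝ) :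
    (2:ℝ) ^ n * Real.sqrt ((∑ j, (c j) ^ 2) / 3) ≤ ∑ σ : Fin n → Bool, |∑ j, c j * sgn σ j| := by
  classical
  set r : (Fin n → Bool) → ℝ := fun σ => ∑ j, c j * sgn σ j with hr
  set N : ℝ := ∑ j, (c j) ^ 2 with hN
  have hNnn : 0 ≤ N := Finset.sum_nonneg fun j _ => sq_nonneg _
  set S1 : ℝ := ∑ σ : Fin n → Bool, |r σ| with hS1
  set S2 : ℝ := ∑ σ : Fin n → Bool, (r σ) ^ 2 with hS2
  set S3 : ℝ := ∑ σ : Fin n → Bool, |r σ| * (r σ) ^ 2 with hS3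
  set S4 : ℝ := ∑ σ : Fin n → Bool, (r σ) ^ 4 with hS4
  have hS1nn : 0 ≤ S1 := Finset.sum_nonneg fun σ _ => abs_nonneg _
  have hS2val : S2 = 2 ^ n * N := sum_sq_row c
  have hS4b : S4 ≤ 3 * 2 ^ n * N ^ 2 := sum_quad_row c
  have cs1 : S2 ^ 2 ≤ S1 * S3 := by
    have h := Finset.sum_mul_sq_le_sq_mul_sq Finset.univ
      (fun σ : Fin n → Bool => Real.sqrt |r σ|)
      (fun σ : Fin n → Bool => Real.sqrt |r σ| * |r σ|)
    have e1 : ∀ σ : Fin n → Bool, Real.sqrt |r σ| * (Real.sqrt |r σ| * |r σ|) = (r σ)^2 := by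
      intro σ
      rw [← mul_assoc, Real.mul_self_sqrt (abs_nonneg _), abs_mul_abs_self, sq]
    have e2 : ∀ σ : Fin n → Bool, (Real.sqrt |r σ|) ^ 2 = |r σ| := fun σ =>
      Real.sq_sqrt (abs_nonneg _)
    have e3 : ∀ σ : Fin n → Bool, (Real.sqrt |r σ| * |r σ|) ^ 2 = |r σ| * (r σ)^2 := by
      intro σ
      rw [mul_pow, Real.sq_sqrt (abs_nonneg _), sq_abs]
    rw [Finset.sum_congr rfl fun σ _ => e1 σ, Finset.sum_congr rfl fun σ _ => e2 σ,
      Finset.sum_congr rfl fun σ _ => e3 σ] at h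
    exact h
  have cs2 : S3 ^ 2 ≤ S2 * S4 := by
    have h := Finset.sum_mul_sq_le_sq_mul_sq Finset.univ
      (fun σ : Fin n → Bool => |r σ|)
      (fun σ : Fin n → Bool => (r σ) ^ 2)
    have e2 : ∀ σ : Fin n → Bool, |r σ| ^ 2 = (r σ) ^ 2 := fun σ => sq_abs _
    have e3 : ∀ σ : Fin n → Bool, ((r σ) ^ 2) ^ 2 = (r σ) ^ 4 := fun σ => by ring
    rw [Finset.sum_congr rfl fun σ _ => e2 σ, Finset.sum_congr rfl fun σ _ => e3 σ] at h
    exact h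
  by_cases hN0 : N = 0
  · rw [hN0]
    norm_num
    exact hS1nn
  · have hNpos : 0 < N := lt_of_le_of_ne hNnn (Ne.symm hN0)
    have hP : (0:ℝ) < 2 ^ n := by positivity
    have hS2nn : 0 ≤ S2 := Finset.sum_nonneg fun σ _ => sq_nonneg _
    have key : (2:ℝ) ^ (n) ^ 2 = 0 ∨ True := Or.inr trivial
    have step1 : S2 ^ 4 ≤ S1 ^ 2 * (S2 * S4) := by
      calc S2 ^ 4 = (S2 ^ 2) ^ 2 := by ring
        _ ≤ (S1 * S3) ^ 2 := by
            apply pow_le_pow_left₀ (sq_nonneg _) cs1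
        _ = S1 ^ 2 * S3 ^ 2 := by ring
        _ ≤ S1 ^ 2 * (S2 * S4) := by
            apply mul_le_mul_of_nonneg_left cs2 (sq_nonneg _)
    have step2 : S2 ^ 4 ≤ S1 ^ 2 * (S2 * (3 * 2 ^ n * N ^ 2)) := by
      refine le_trans step1 ?_
      apply mul_le_mul_of_nonneg_left _ (sq_nonneg S1)
      exact mul_le_mul_of_nonneg_left hS4b hS2nn
    have ht2 : ((2:ℝ) ^ n) ^ 2 * (N / 3) ≤ S1 ^ 2 := by
      rw [hS2val] at step2
      have h3 : (0:ℝ) < 3 * (2 ^ n) ^ 2 * N ^ 3 := by positivity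
      nlinarith [step2, sq_nonneg S1, hNpos, hP]
    have := Real.sqrt_le_sqrt ht2
    rw [Real.sqrt_mul (sq_nonneg _), Real.sqrt_sq hP.le, Real.sqrt_sq hS1nn] at this
    exact this
open Classical in
/-- real adjacency indicator -/
noncomputable def adjR {n : ℕ} (G : SimpleGraph (Fin n)) : Fin n → Fin n → ℝ :=
  fun i j => if G.Adj i j then 1 else 0

variable {n d : ℕ} {G : SimpleGraph (Fin n)}

lemma adjR_symm (G : SimpleGraph (Fin n)) (i j : Fin n) : adjR G i j = adjR G j i := by
  unfold adjR
  by_cases h : G.Adj i j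
  · rw [if_pos h, if_pos h.symm]
  · rw [if_neg h, if_neg fun hs => h hs.symm]

lemma adjR_nonneg (G : SimpleGraph (Fin n)) (i j : Fin n) : 0 ≤ adjR G i j := by
  unfold adjR; split <;> norm_num

lemma adjR_le_one (G : SimpleGraph (Fin n)) (i j : Fin n) : adjR G i j ≤ 1 := by
  unfold adjR; split <;> norm_num

lemma row_sum_adjR (hG : IsRegOfDeg G d) : ∀ v, ∑ j, adjR G v j = d := by
  intro v
  have hdeg : ∀ (inst : DecidableRel G.Adj), (@SimpleGraph.degree (Fin n) G v
      (@SimpleGraph.neighborSetFintype (Fin n) G _ inst v)) = d := by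
    intro inst
    have h := hG v
    convert h using 2 <;> exact Subsingleton.elim _ _
  classical
  have h2 : (SimpleGraph.degree G v : ℝ) = ∑ j, adjR G v j := by
    rw [SimpleGraph.degree_eq_sum_if_adj]
    refine Finset.sum_congr rfl fun j _ => ?_
    unfold adjR
    by_cases h : G.Adj v j
    · rw [if_pos h]
    · rw [if_neg h]
  rw [← h2, hdeg]

/-- quadratic form of a regular graph on sign vectors -/
lemma quad_eq (hG : IsRegOfDeg G d) (z : Fin n → ℝ) (hz : ∀ i, z i = 1 ∨ z i = -1) :
    lapQuadForm G z = d * n - ∑ i, ∑ j, adjR G i j * (z i * z j) := by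
  classical
  have hzsq : ∀ i, z i * z i = 1 := fun i => by rcases hz i with h | h <;> rw [h] <;> norm_num
  unfold lapQuadForm
  rw [SimpleGraph.lapMatrix, Matrix.sub_mulVec, dotProduct_sub,
    SimpleGraph.dotProduct_mulVec_degMatrix]
  have h1 : ∑ i, (SimpleGraph.degree G i : ℝ) * z i * z i = d * n := by
    have : ∀ i : Fin n, (SimpleGraph.degree G i : ℝ) * z i * z i = d := by
      intro i
      rw [mul_assoc, hzsq i, mul_one]
      have h2 : (SimpleGraph.degree G i : ℝ) = ∑ j, adjR G i j := by
        rw [SimpleGraph.degree_eq_sum_if_adj]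
        refine Finset.sum_congr rfl fun j _ => ?_
        unfold adjR
        by_cases h : G.Adj i j
        · rw [if_pos h]
        · rw [if_neg h]
      rw [h2, row_sum_adjR hG]
    rw [Finset.sum_congr rfl fun i _ => this i, Finset.sum_const, nsmul_eq_mul]
    simp [mul_comm]
  have h2 : z ⬝ᵥ (SimpleGraph.adjMatrix ℝ G *ᵥ z) = ∑ i, ∑ j, adjR G i j * (z i * z j) := by
    simp only [dotProduct, Matrix.mulVec, SimpleGraph.adjMatrix_apply]
    refine Finset.sum_congr rfl fun i _ => ?_
    rw [Finset.mul_sum]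
    refine Finset.sum_congr rfl fun j _ => ?_
    unfold adjR
    by_cases h : G.Adj i j
    · rw [if_pos h]; ring
    · rw [if_neg h]; ring
  rw [h1, h2]

lemma sgn_pm (σ : Fin n → Bool) (j : Fin n) : sgn σ j = 1 ∨ sgn σ j = -1 := by
  unfold sgn; split <;> simp

/-- splitting a symmetric cross-supported double sum -/
lemma sym_split (L : Set (Fin n)) [DecidablePred (· ∈ L)] (f : Fin n → Fin n → ℝ)
    (hsym : ∀ i j, f i j = f j i)
    (hcross : ∀ i j, (i ∈ L ↔ j ∈ L) → f i j = 0) :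
    ∑ i, ∑ j, f i j = 2 * ∑ i ∈ Finset.univ.filter (· ∈ L), ∑ j, f i j := by
  rw [← Finset.sum_filter_add_sum_filter_not Finset.univ (· ∈ L) (fun i => ∑ j, f i j)]
  have key : ∑ i ∈ Finset.univ.filter (¬ · ∈ L), ∑ j, f i j
      = ∑ i ∈ Finset.univ.filter (· ∈ L), ∑ j, f i j := by
    calc ∑ i ∈ Finset.univ.filter (¬ · ∈ L), ∑ j, f i j
        = ∑ i ∈ Finset.univ.filter (¬ · ∈ L), ∑ j, f j i := by
          exact Finset.sum_congr rfl fun i _ => Finset.sum_congr rfl fun j _ => hsym i j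
      _ = ∑ j, ∑ i ∈ Finset.univ.filter (¬ · ∈ L), f j i := Finset.sum_comm
      _ = ∑ j ∈ Finset.univ.filter (· ∈ L), ∑ i ∈ Finset.univ.filter (¬ · ∈ L), f j i := by
          rw [← Finset.sum_filter_add_sum_filter_not Finset.univ (· ∈ L)
            (fun j => ∑ i ∈ Finset.univ.filter (¬ · ∈ L), f j i)]
          have hzero : ∑ j ∈ Finset.univ.filter (¬ · ∈ L),
              ∑ i ∈ Finset.univ.filter (¬ · ∈ L), f j i = 0 := by
            refine Finset.sum_eq_zero fun j hj => Finset.sum_eq_zero fun i hi => ?_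
            rw [Finset.mem_filter] at hj hi
            exact hcross j i (iff_of_false (by simpa using hj.2) (by simpa using hi.2))
          rw [hzero, add_zero]
      _ = ∑ j ∈ Finset.univ.filter (· ∈ L), ∑ i, f j i := by
          refine Finset.sum_congr rfl fun j hj => ?_
          rw [Finset.mem_filter] at hj
          rw [← Finset.sum_filter_add_sum_filter_not Finset.univ (· ∈ L) (fun i => f j i)]
          have hzero : ∑ i ∈ Finset.univ.filter (· ∈ L), f j i = 0 := by
            refine Finset.sum_eq_zero fun i hi => ?_
            rw [Finset.mem_filter] at hi
            exact hcross j i (iff_of_true hj.2 hi.2)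
          rw [hzero, zero_add]
  rw [key]
  ring

/-- Existence of a good sign vector detecting the discrepancy. -/
lemma exists_good_vec (L : Set (Fin n)) [DecidablePred (· ∈ L)] (c : Fin n → Fin n → ℝ)
    (hsym : ∀ i j, c i j = c j i)
    (hcross : ∀ i j, (i ∈ L ↔ j ∈ L) → c i j = 0) :
    ∃ z : Fin n → ℝ, (∀ i, z i = 1 ∨ z i = -1) ∧
      2 * ∑ i ∈ Finset.univ.filter (· ∈ L), Real.sqrt ((∑ j, (c i j) ^ 2) / 3)
        ≤ ∑ i, ∑ j, c i j * (z i * z j) := by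
  classical
  set T : ℝ := ∑ i ∈ Finset.univ.filter (· ∈ L), Real.sqrt ((∑ j, (c i j) ^ 2) / 3) with hT
  -- average over the hypercube
  have havg : (2:ℝ) ^ n * T ≤ ∑ σ : Fin n → Bool,
      ∑ i ∈ Finset.univ.filter (· ∈ L), |∑ j, c i j * sgn σ j| := by
    rw [Finset.sum_comm, hT, Finset.mul_sum]
    exact Finset.sum_le_sum fun i _ => khintchine_row (c i)
  have hex : ∃ σ : Fin n → Bool,
      T ≤ ∑ i ∈ Finset.univ.filter (· ∈ L), |∑ j, c i j * sgn σ j| := by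
    by_contra hcon
    push_neg at hcon
    have hlt : ∑ σ : Fin n → Bool,
        ∑ i ∈ Finset.univ.filter (· ∈ L), |∑ j, c i j * sgn σ j|
        < ∑ _σ : Fin n → Bool, T := by
      apply Finset.sum_lt_sum_of_nonempty
      · exact Finset.univ_nonempty
      · intro σ _; exact hcon σ
    rw [sum_const_hyper] at hlt
    linarith
  obtain ⟨σ, hσ⟩ := hex
  set r : Fin n → ℝ := fun i => ∑ j, c i j * sgn σ j with hr
  set x : Fin n → ℝ := fun i => if 0 ≤ r i then 1 else -1 with hx
  set z : Fin n → ℝ := fun i => if i ∈ L then x i else sgn σ i with hz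
  have hzpm : ∀ i, z i = 1 ∨ z i = -1 := by
    intro i
    simp only [hz, hx]
    split_ifs <;> simp [sgn_pm σ i]
  refine ⟨z, hzpm, ?_⟩
  have hsplit : ∑ i, ∑ j, c i j * (z i * z j)
      = 2 * ∑ i ∈ Finset.univ.filter (· ∈ L), ∑ j, c i j * (z i * z j) :=
    sym_split L _ (fun i j => by rw [hsym i j]; ring)
      (fun i j h => by rw [hcross i j h]; ring)
  have hinner : ∀ i ∈ Finset.univ.filter (· ∈ L),
      ∑ j, c i j * (z i * z j) = |r i| := by
    intro i hi
    rw [Finset.mem_filter] at hi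
    have hzi : z i = x i := if_pos hi.2
    have h1 : ∑ j, c i j * (z i * z j) = x i * ∑ j, c i j * z j := by
      rw [Finset.mul_sum]
      exact Finset.sum_congr rfl fun j _ => by rw [hzi]; ring
    have h2 : ∑ j, c i j * z j = r i := by
      refine Finset.sum_congr rfl fun j _ => ?_
      by_cases hj : j ∈ L
      · rw [hcross i j (iff_of_true hi.2 hj)]
        ring
      · have : z j = sgn σ j := if_neg hj
        rw [this]
    rw [h1, h2]
    by_cases hri : 0 ≤ r i
    · rw [show x i = 1 from if_pos hri, one_mul, abs_of_nonneg hri]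
    · push_neg at hri
      rw [show x i = -1 from if_neg (not_le.mpr hri), abs_of_neg hri]
      ring
  rw [hsplit, Finset.sum_congr rfl hinner]
  linarith

end CutRigidityAux


set_option maxHeartbeats 1600000

/-- **Rigidity of cut approximation.** If two simple `d`-regular bipartite graphs `G, H` with
the same bipartition satisfy `(1-ε) xᵀL_Gx ≤ xᵀL_Hx ≤ (1+ε) xᵀL_Gx` for all `x ∈ {-1,1}ⁿ`,
then they share at least `(dn/2)(1 - 3√d·ε)` edges. -/
theorem cut_rigidity (n d : ℕ) (ε : ℝ) (hε : 0 < ε) (L : Set (Fin n))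
    (G H : SimpleGraph (Fin n))
    (hG : IsRegOfDeg G d) (hH : IsRegOfDeg H d)
    (hGbip : IsBipartiteWith G L) (hHbip : IsBipartiteWith H L)
    (happrox : ∀ x : Fin n → ℝ, (∀ i, x i = 1 ∨ x i = -1) →
      (1 - ε) * lapQuadForm G x ≤ lapQuadForm H x ∧
        lapQuadForm H x ≤ (1 + ε) * lapQuadForm G x) :
    ((d : ℝ) * n / 2) * (1 - 3 * Real.sqrt d * ε) ≤ ((G.edgeSet ∩ H.edgeSet).ncard : ℝ) := by
  classical
  open CutRigidityAux Finset in
  -- the signed difference matrix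
  set c : Fin n → Fin n → ℝ := fun i j => adjR G i j - adjR H i j with hc
  have hcsym : ∀ i j, c i j = c j i := fun i j => by
    simp only [hc, adjR_symm G i j, adjR_symm H i j]
  have hccross : ∀ i j, (i ∈ L ↔ j ∈ L) → c i j = 0 := by
    intro i j hij
    have hg : ¬ G.Adj i j := fun ha => by
      have := hGbip i j ha
      tauto
    have hh : ¬ H.Adj i j := fun ha => by
      have := hHbip i j ha
      tauto
    simp only [hc, adjR, if_neg hg, if_neg hh, sub_zero]
  -- row sums
  have hrowG : ∀ v, ∑ j, adjR G v j = d := row_sum_adjR hG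
  have hrowH : ∀ v, ∑ j, adjR H v j = d := row_sum_adjR hH
  have hAsum : ∑ i, ∑ j, adjR G i j = d * n := by
    rw [Finset.sum_congr rfl fun i _ => hrowG i, Finset.sum_const, nsmul_eq_mul]
    simp [mul_comm]
  have hBsum : ∑ i, ∑ j, adjR H i j = d * n := by
    rw [Finset.sum_congr rfl fun i _ => hrowH i, Finset.sum_const, nsmul_eq_mul]
    simp [mul_comm]
  -- the discrepancy test vector
  obtain ⟨z, hz, hlow⟩ := exists_good_vec L c hcsym hccross
  -- quadratic forms
  have hQG := quad_eq hG z hz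
  have hQH := quad_eq hH z hz
  have hdiff : lapQuadForm H z - lapQuadForm G z = ∑ i, ∑ j, c i j * (z i * z j) := by
    rw [hQG, hQH]
    have : ∀ i, ∑ j, c i j * (z i * z j)
        = ∑ j, adjR G i j * (z i * z j) - ∑ j, adjR H i j * (z i * z j) := by
      intro i
      rw [← Finset.sum_sub_distrib]
      exact Finset.sum_congr rfl fun j _ => by simp only [hc]; ring
    rw [Finset.sum_congr rfl fun i _ => this i, Finset.sum_sub_distrib]
    ring
  -- the quadratic form of G is at most 2dn
  have hSlow : -(∑ i, ∑ j, adjR G i j) ≤ ∑ i, ∑ j, adjR G i j * (z i * z j) := by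
    rw [← Finset.sum_neg_distrib]
    apply Finset.sum_le_sum
    intro i _
    rw [← Finset.sum_neg_distrib]
    apply Finset.sum_le_sum
    intro j _
    have hA := adjR_nonneg G i j
    rcases hz i with h | h <;> rcases hz j with h' | h' <;> rw [h, h'] <;> ring_nf <;> linarith
  have hQGle : lapQuadForm G z ≤ 2 * (d * n) := by
    rw [hQG]
    rw [hAsum] at hSlow
    linarith
  have hQGnn : 0 ≤ lapQuadForm G z := by
    have h1 := (happrox z hz).1
    have h2 := (happrox z hz).2
    nlinarith [h1, h2, hε]
  -- approximation bound
  have hub : ∑ i, ∑ j, c i j * (z i * z j) ≤ ε * (2 * (d * n)) := by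
    have h2 := (happrox z hz).2
    have : lapQuadForm H z - lapQuadForm G z ≤ ε * lapQuadForm G z := by linarith
    rw [hdiff] at this
    have := le_trans this (mul_le_mul_of_nonneg_left hQGle hε.le)
    linarith
  -- hence the sqrt-sum is small
  set T : ℝ := ∑ i ∈ Finset.univ.filter (· ∈ L), Real.sqrt ((∑ j, (c i j) ^ 2) / 3) with hT
  have hTsmall : T ≤ ε * (d * n) := by
    have := le_trans hlow hub
    linarith
  -- row square sums
  have hNle : ∀ i, ∑ j, (c i j) ^ 2 ≤ 2 * d := by
    intro i
    have hpt : ∀ j, (c i j) ^ 2 ≤ adjR G i j + adjR H i j := by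
      intro j
      simp only [hc, adjR]
      split_ifs <;> norm_num
    calc ∑ j, (c i j) ^ 2 ≤ ∑ j, (adjR G i j + adjR H i j) := Finset.sum_le_sum fun j _ => hpt j
      _ = 2 * d := by rw [Finset.sum_add_distrib, hrowG i, hrowH i]; ring
  have hNsqrt : ∀ i, ∑ j, (c i j) ^ 2 ≤ Real.sqrt (6 * d) * Real.sqrt ((∑ j, (c i j) ^ 2) / 3) := by
    intro i
    set N : ℝ := ∑ j, (c i j) ^ 2 with hN
    have hNnn : 0 ≤ N := Finset.sum_nonneg fun j _ => sq_nonneg _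
    rw [← Real.sqrt_mul (by positivity : (0:ℝ) ≤ 6 * d)]
    have h1 : N = Real.sqrt (N ^ 2) := (Real.sqrt_sq hNnn).symm
    rw [h1]
    apply Real.sqrt_le_sqrt
    have := hNle i
    rw [← hN] at this
    nlinarith [hNnn, this]
  -- total square sum bound
  set K : ℝ := ∑ i ∈ Finset.univ.filter (· ∈ L), ∑ j, (c i j) ^ 2 with hK
  have hKb : K ≤ Real.sqrt (6 * d) * (ε * (d * n)) := by
    have h1 : K ≤ Real.sqrt (6 * d) * T := by
      rw [hT, Finset.mul_sum]
      exact Finset.sum_le_sum fun i _ => hNsqrt i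
    have h2 : Real.sqrt (6 * d) * T ≤ Real.sqrt (6 * d) * (ε * (d * n)) :=
      mul_le_mul_of_nonneg_left hTsmall (Real.sqrt_nonneg _)
    linarith
  -- square sum identity
  have hsym2 : ∑ i, ∑ j, (c i j) ^ 2 = 2 * K := by
    exact sym_split L (fun i j => (c i j) ^ 2)
      (fun i j => by show (c i j) ^ 2 = (c j i) ^ 2; rw [hcsym i j])
      (fun i j h => by show (c i j) ^ 2 = 0; rw [hccross i j h]; norm_num)
  -- expand the square sum
  have hAB : ∑ i, ∑ j, (c i j) ^ 2
      = 2 * (d * n) - 2 * ∑ i, ∑ j, adjR G i j * adjR H i j := by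
    have hpt : ∀ i j, (c i j) ^ 2
        = adjR G i j + adjR H i j - 2 * (adjR G i j * adjR H i j) := by
      intro i j
      simp only [hc, adjR]
      split_ifs <;> norm_num
    calc ∑ i, ∑ j, (c i j) ^ 2
        = ∑ i, ∑ j, (adjR G i j + adjR H i j - 2 * (adjR G i j * adjR H i j)) :=
          Finset.sum_congr rfl fun i _ => Finset.sum_congr rfl fun j _ => hpt i j
      _ = (∑ i, ∑ j, adjR G i j) + (∑ i, ∑ j, adjR H i j)
            - 2 * ∑ i, ∑ j, adjR G i j * adjR H i j := by
          simp only [Finset.sum_sub_distrib, Finset.sum_add_distrib, Finset.mul_sum]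
      _ = 2 * (d * n) - 2 * ∑ i, ∑ j, adjR G i j * adjR H i j := by
          rw [hAsum, hBsum]
          ring
  -- the product sum counts common edges twice
  have hcommon : ∑ i, ∑ j, adjR G i j * adjR H i j = 2 * ((G ⊓ H).edgeFinset.card : ℝ) := by
    have hpt : ∀ i j, adjR G i j * adjR H i j = if (G ⊓ H).Adj i j then (1:ℝ) else 0 := by
      intro i j
      simp only [adjR, SimpleGraph.inf_adj]
      by_cases hg : G.Adj i j <;> by_cases hh : H.Adj i j <;>
        simp [hg, hh]
    have hdeg : ∀ i, ∑ j, (if (G ⊓ H).Adj i j then (1:ℝ) else 0) = ((G ⊓ H).degree i : ℝ) := by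
      intro i
      rw [SimpleGraph.degree_eq_sum_if_adj]
    calc ∑ i, ∑ j, adjR G i j * adjR H i j
        = ∑ i, ((G ⊓ H).degree i : ℝ) := by
          refine Finset.sum_congr rfl fun i _ => ?_
          rw [Finset.sum_congr rfl fun j _ => hpt i j, hdeg i]
      _ = ((∑ i, (G ⊓ H).degree i : ℕ) : ℝ) := by push_cast; rfl
      _ = 2 * ((G ⊓ H).edgeFinset.card : ℝ) := by
          have hnat : (∑ i, (G ⊓ H).degree i) = 2 * (G ⊓ H).edgeFinset.card := by
            have h := SimpleGraph.sum_degrees_eq_twice_card_edges (G ⊓ H)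
            convert h using 4
          rw [hnat]
          push_cast
          ring
  -- identify the cardinalities
  have hncard : ((G.edgeSet ∩ H.edgeSet).ncard : ℝ) = ((G ⊓ H).edgeFinset.card : ℝ) := by
    rw [← SimpleGraph.edgeSet_inf, ← SimpleGraph.coe_edgeFinset, Set.ncard_coe_finset]
  -- final arithmetic
  have hsqrt6 : Real.sqrt (6 * d) ≤ 3 * Real.sqrt d := by
    have h9 : (3:ℝ) * Real.sqrt d = Real.sqrt (9 * d) := by
      rw [show (9:ℝ) * d = 3 ^ 2 * d by ring, Real.sqrt_mul (by positivity),
        Real.sqrt_sq (by norm_num : (0:ℝ) ≤ 3)]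
    rw [h9]
    apply Real.sqrt_le_sqrt
    have : (0:ℝ) ≤ d := Nat.cast_nonneg d
    nlinarith
  have hdnn : (0:ℝ) ≤ (d:ℝ) * n := by positivity
  have hKb2 : K ≤ 3 * Real.sqrt d * (ε * (d * n)) := by
    refine le_trans hKb ?_
    apply mul_le_mul_of_nonneg_right hsqrt6
    positivity
  rw [hncard]
  have hE : 2 * (d * n : ℝ) - 2 * (2 * ((G ⊓ H).edgeFinset.card : ℝ)) = 2 * K := by
    rw [← hcommon, ← hAB, hsym2]
  nlinarith [hE, hKb2, hε, hdnn, Real.sqrt_nonneg (d:ℝ)]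
end

section
/- Let m ≥ 2 and let y, z be unit vectors in ℝ^m. If w is distributed according to the uniform (normalized surface) probability measure on the unit sphere S^{m−1} ⊆ ℝ^m, then E[sgn(⟨y,w⟩)·sgn(⟨z,w⟩)] = (2/π)·arcsin(⟨y,z⟩), where sgn(t) = 1 if t ≥ 0 and sgn(t) = −1 if t < 0. -/
open MeasureTheory Metric
open scoped RealInnerProductSpace

/-- The sign function `sgn(t) = 1` if `t ≥ 0` and `-1` if `t < 0`. -/
noncomputable def sgn (t : ℝ) : ℝ := if 0 ≤ t then 1 else -1

/-- The uniform (normalized surface) probability measure on the unit sphere of `ℝᵐ`. -/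
noncomputable def uniformSphereMeasure (m : ℕ) :
    Measure (sphere (0 : EuclideanSpace ℝ (Fin m)) 1) :=
  ((volume : Measure (EuclideanSpace ℝ (Fin m))).toSphere Set.univ)⁻¹ •
    (volume : Measure (EuclideanSpace ℝ (Fin m))).toSphere

/-!
The integrand is invariant under positive rescaling of `w`, so its sphere average equals its
integral against the Gaussian density `exp (-π ‖x‖²)` (polar decomposition of Lebesgue measure).
Write `z = cos α • y + sin α • u` with `u` a unit vector orthogonal to `y` and `α` the angle
between `y` and `z`. By rotation invariance of the Gaussian the integral only sees the plane of
`y` and `u`; in polar coordinates there the integrand is `sgn (cos θ) * sgn (cos (θ - α))`,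
which is `-1` on a set of angles of measure `2α` out of `2π`. So the expectation is
`1 - 2α/π = (2/π) arcsin ⟪y, z⟫`.
-/

open Real Set Filter

lemma sgn_of_nonneg {t : ℝ} (h : 0 ≤ t) : sgn t = 1 := if_pos h

lemma sgn_of_neg {t : ℝ} (h : t < 0) : sgn t = -1 := if_neg h.not_ge

lemma abs_sgn (t : ℝ) : |sgn t| = 1 := by
  unfold sgn; split_ifs <;> simp

lemma measurable_sgn : Measurable sgn :=
  Measurable.ite measurableSet_Ici measurable_const measurable_const

lemma sgn_mul_of_pos {c : ℝ} (hc : 0 < c) (t : ℝ) : sgn (c * t) = sgn t := by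
  rcases le_or_gt 0 t with h | h
  · rw [sgn_of_nonneg h, sgn_of_nonneg (mul_nonneg hc.le h)]
  · rw [sgn_of_neg h, sgn_of_neg (mul_neg_of_pos_of_neg hc h)]

lemma sgn_cos_eq_one_of_mem_Ioo {x : ℝ} (hx : x ∈ Ioo (-(π / 2)) (π / 2)) : sgn (cos x) = 1 :=
  sgn_of_nonneg (cos_pos_of_mem_Ioo hx).le

lemma sgn_cos_eq_neg_one_of_mem_Ioo {x : ℝ} (hx : x ∈ Ioo (π / 2) (3 * π / 2)) :
    sgn (cos x) = -1 :=
  sgn_of_neg (cos_neg_of_pi_div_two_lt_of_lt hx.1 (by linarith [hx.2]))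

lemma sgn_cos_eq_neg_one_of_mem_Ioo_neg {x : ℝ} (hx : x ∈ Ioo (-(3 * π / 2)) (-(π / 2))) :
    sgn (cos x) = -1 := by
  rw [← cos_neg]
  exact sgn_cos_eq_neg_one_of_mem_Ioo ⟨by linarith [hx.2], by linarith [hx.1]⟩

lemma intervalIntegral_eq_of_eqOn_Ioo {f : ℝ → ℝ} {a b c : ℝ} (hab : a ≤ b)
    (hf : EqOn f (fun _ => c) (Ioo a b)) : ∫ x in a..b, f x = (b - a) * c := by
  rw [intervalIntegral.integral_of_le hab, integral_Ioc_eq_integral_Ioo,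
    setIntegral_congr_fun measurableSet_Ioo hf, setIntegral_const, volume_real_Ioo_of_le hab,
    smul_eq_mul]

lemma intervalIntegrable_of_abs_le_one {f : ℝ → ℝ} (hf : Measurable f) (hb : ∀ x, |f x| ≤ 1)
    (a b : ℝ) : IntervalIntegrable f volume a b :=
  (intervalIntegrable_const (c := (1 : ℝ))).mono_fun hf.aestronglyMeasurable
    (ae_of_all _ fun x => by simpa using hb x)

/-- Over the period `[-π/2, 3π/2]` the two sign factors are constant between the points
`α - π/2, π/2, α + π/2`, where they change sign. -/
lemma integral_sgn_cos_mul_sgn_cos_sub {α : ℝ} (h0 : 0 ≤ α) (hπ : α ≤ π) :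
    ∫ θ in (-π)..π, sgn (cos θ) * sgn (cos (θ - α)) = 2 * π - 4 * α := by
  have hpi := pi_pos
  set f : ℝ → ℝ := fun θ => sgn (cos θ) * sgn (cos (θ - α))
  have hf : ∀ a b, IntervalIntegrable f volume a b :=
    intervalIntegrable_of_abs_le_one
      ((measurable_sgn.comp measurable_cos).mul
        (measurable_sgn.comp (measurable_cos.comp (measurable_id.sub_const α))))
      (fun θ => by simp only [f, abs_mul, abs_sgn]; norm_num)
  have hper : Function.Periodic f (2 * π) := fun θ => by
    simp only [f, add_sub_right_comm, cos_add_two_pi]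
  have h1 : ∫ θ in (-(π / 2))..(α - π / 2), f θ = (α - π / 2 - -(π / 2)) * -1 :=
    intervalIntegral_eq_of_eqOn_Ioo (by linarith) fun θ hθ => by
      simp only [f, sgn_cos_eq_one_of_mem_Ioo (x := θ) ⟨hθ.1, by linarith [hθ.2]⟩,
        sgn_cos_eq_neg_one_of_mem_Ioo_neg (x := θ - α) ⟨by linarith [hθ.1], by linarith [hθ.2]⟩]
      norm_num
  have h2 : ∫ θ in (α - π / 2)..(π / 2), f θ = (π / 2 - (α - π / 2)) * 1 :=
    intervalIntegral_eq_of_eqOn_Ioo (by linarith) fun θ hθ => by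
      simp only [f, sgn_cos_eq_one_of_mem_Ioo (x := θ) ⟨by linarith [hθ.1], hθ.2⟩,
        sgn_cos_eq_one_of_mem_Ioo (x := θ - α) ⟨by linarith [hθ.1], by linarith [hθ.2]⟩]
      norm_num
  have h3 : ∫ θ in (π / 2)..(α + π / 2), f θ = (α + π / 2 - π / 2) * -1 :=
    intervalIntegral_eq_of_eqOn_Ioo (by linarith) fun θ hθ => by
      simp only [f, sgn_cos_eq_neg_one_of_mem_Ioo (x := θ) ⟨hθ.1, by linarith [hθ.2]⟩,
        sgn_cos_eq_one_of_mem_Ioo (x := θ - α) ⟨by linarith [hθ.1], by linarith [hθ.2]⟩]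
      norm_num
  have h4 : ∫ θ in (α + π / 2)..(3 * π / 2), f θ = (3 * π / 2 - (α + π / 2)) * 1 :=
    intervalIntegral_eq_of_eqOn_Ioo (by linarith) fun θ hθ => by
      simp only [f, sgn_cos_eq_neg_one_of_mem_Ioo (x := θ) ⟨by linarith [hθ.1], hθ.2⟩,
        sgn_cos_eq_neg_one_of_mem_Ioo (x := θ - α) ⟨by linarith [hθ.1], by linarith [hθ.2]⟩]
      norm_num
  calc ∫ θ in (-π)..π, f θ = ∫ θ in (-(π / 2))..(-(π / 2) + 2 * π), f θ := by
        rw [← hper.intervalIntegral_add_eq (-π) (-(π / 2))]; ring_nf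
    _ = (∫ θ in (-(π / 2))..(α - π / 2), f θ) + (∫ θ in (α - π / 2)..(π / 2), f θ) +
        (∫ θ in (π / 2)..(α + π / 2), f θ) + ∫ θ in (α + π / 2)..(3 * π / 2), f θ := by
        rw [intervalIntegral.integral_add_adjacent_intervals (hf _ _) (hf _ _),
          intervalIntegral.integral_add_adjacent_intervals (hf _ _) (hf _ _),
          intervalIntegral.integral_add_adjacent_intervals (hf _ _) (hf _ _)]
        ring_nf
    _ = 2 * π - 4 * α := by rw [h1, h2, h3, h4]; ring

lemma integral_Ioi_mul_exp_neg_pi_mul_sq :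
    ∫ r in Ioi (0 : ℝ), r * exp (-π * r ^ 2) = (2 * π)⁻¹ := by
  have h := integral_mul_cexp_neg_mul_sq (b := (π : ℂ)) (by simpa using pi_pos)
  rw [← Complex.ofReal_inj, ← integral_complex_ofReal]
  push_cast
  exact h

lemma integral_sgn_mul_sgn_cos_sin_mul_gaussian {α : ℝ} (h0 : 0 ≤ α) (hπ : α ≤ π) :
    ∫ p : ℝ × ℝ, sgn p.1 * sgn (cos α * p.1 + sin α * p.2) *
        (exp (-π * p.1 ^ 2) * exp (-π * p.2 ^ 2)) = 1 - 2 * α / π := by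
  have hpolar : EqOn
      (fun p : ℝ × ℝ => p.1 • (sgn (polarCoord.symm p).1 *
        sgn (cos α * (polarCoord.symm p).1 + sin α * (polarCoord.symm p).2) *
        (exp (-π * (polarCoord.symm p).1 ^ 2) * exp (-π * (polarCoord.symm p).2 ^ 2))))
      (fun p => p.1 * exp (-π * p.1 ^ 2) * (sgn (cos p.2) * sgn (cos (p.2 - α))))
      (Ioi 0 ×ˢ Ioo (-π) π) := by
    rintro ⟨r, θ⟩ ⟨hr, -⟩
    have hr : 0 < r := hr
    have hrot : cos α * (r * cos θ) + sin α * (r * sin θ) = r * cos (θ - α) := by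
      rw [cos_sub]; ring
    have hnorm : exp (-π * (r * cos θ) ^ 2) * exp (-π * (r * sin θ) ^ 2) = exp (-π * r ^ 2) := by
      rw [← exp_add]
      congr 1
      linear_combination (-π * r ^ 2) * sin_sq_add_cos_sq θ
    simp only [polarCoord_symm_apply, smul_eq_mul]
    rw [hrot, hnorm, sgn_mul_of_pos hr, sgn_mul_of_pos hr]
    ring
  have hangle : ∫ θ in Ioo (-π) π, sgn (cos θ) * sgn (cos (θ - α)) = 2 * π - 4 * α := by
    rw [← integral_Ioc_eq_integral_Ioo, ← intervalIntegral.integral_of_le (by linarith [pi_pos])]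
    exact integral_sgn_cos_mul_sgn_cos_sub h0 hπ
  rw [← integral_comp_polarCoord_symm, polarCoord_target,
    setIntegral_congr_fun (measurableSet_Ioi.prod measurableSet_Ioo) hpolar, Measure.volume_eq_prod,
    setIntegral_prod_mul (fun r => r * exp (-π * r ^ 2)) (fun θ => sgn (cos θ) * sgn (cos (θ - α))),
    integral_Ioi_mul_exp_neg_pi_mul_sq, hangle]
  field_simp
  ring

lemma integral_comp_fin_two_mul_prod {φ : ℝ → ℝ} (hφ : ∫ x, φ x = 1) (K : ℝ × ℝ → ℝ) (k : ℕ) :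
    ∫ u : Fin (k + 2) → ℝ, K (u 0, u 1) * ∏ i, φ (u i) = ∫ p : ℝ × ℝ, K p * (φ p.1 * φ p.2) := by
  induction k with
  | zero =>
    have h := (measurePreserving_piFinTwo fun _ => (volume : Measure ℝ)).integral_comp
      (MeasurableEquiv.measurableEmbedding _) (fun p => K p * (φ p.1 * φ p.2))
    rw [Measure.volume_eq_prod, ← h, volume_pi]
    simp [Fin.prod_univ_two]
  | succ k ih =>
    have h := (volume_preserving_piFinSuccAbove (fun _ => ℝ) (Fin.last (k + 2))).integral_comp
      (MeasurableEquiv.measurableEmbedding _)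
      (fun p => φ p.1 * (K (p.2 0, p.2 1) * ∏ i, φ (p.2 i)))
    rw [Measure.volume_eq_prod,
      integral_prod_mul φ fun v : Fin (k + 2) → ℝ => K (v 0, v 1) * ∏ i, φ (v i), hφ, one_mul,
      ih] at h
    rw [← h]
    refine integral_congr_ae (ae_of_all _ fun u => ?_)
    simp only [MeasurableEquiv.piFinSuccAbove_apply, Fin.insertNthEquiv_last,
      Fin.snocEquiv_symm_apply, Fin.init, Fin.castSucc_zero, Fin.castSucc_one]
    rw [Fin.prod_univ_castSucc]
    ring

section

variable {E : Type*} [NormedAddCommGroup E] [InnerProductSpace ℝ E] [FiniteDimensional ℝ E]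

lemma exists_orthonormalBasis_apply_zero_apply_one {k : ℕ} (hE : Module.finrank ℝ E = k + 2)
    {u v : E} (hu : ‖u‖ = 1) (hv : ‖v‖ = 1) (huv : ⟪u, v⟫ = 0) :
    ∃ b : OrthonormalBasis (Fin (k + 2)) ℝ E, b 0 = u ∧ b 1 = v := by
  let w : Fin (k + 2) → E := fun i => if i = 0 then u else v
  have h01 : (0 : Fin (k + 2)) ≠ 1 := by simp
  have hw : Orthonormal ℝ (({0, 1} : Set (Fin (k + 2))).domRestrict w) := by
    rw [orthonormal_iff_ite]
    rintro ⟨i, rfl | rfl⟩ ⟨j, rfl | rfl⟩ <;>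
      simp [w, Subtype.ext_iff, h01, h01.symm, real_inner_comm, hu, hv, huv]
  obtain ⟨b, hb⟩ := hw.exists_orthonormalBasis_extension_of_card_eq (by simpa using hE)
  exact ⟨b, by simpa [w] using hb 0 (by simp), by simpa [w, h01.symm] using hb 1 (by simp)⟩

lemma exists_norm_eq_one_inner_eq_zero (hE : 2 ≤ Module.finrank ℝ E) {y : E} (hy : y ≠ 0) :
    ∃ u : E, ‖u‖ = 1 ∧ ⟪y, u⟫ = 0 := by
  have hpos : 0 < Module.finrank ℝ (ℝ ∙ y)ᗮ := by
    have := (ℝ ∙ y).finrank_add_finrank_orthogonal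
    rw [finrank_span_singleton hy] at this
    omega
  obtain ⟨⟨u, hu⟩, hu0⟩ := Module.finrank_pos_iff_exists_ne_zero.1 hpos
  have hu0 : u ≠ 0 := by simpa using hu0
  refine ⟨‖u‖⁻¹ • u, norm_smul_inv_norm hu0, ?_⟩
  rw [real_inner_smul_right, Submodule.mem_orthogonal_singleton_iff_inner_right.1 hu, mul_zero]

open InnerProductGeometry in
lemma exists_eq_cos_angle_smul_add_sin_angle_smul (hE : 2 ≤ Module.finrank ℝ E) {y z : E}
    (hy : ‖y‖ = 1) (hz : ‖z‖ = 1) :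
    ∃ u : E, ‖u‖ = 1 ∧ ⟪y, u⟫ = 0 ∧ z = cos (angle y z) • y + sin (angle y z) • u := by
  set w := z - ⟪y, z⟫ • y
  have hyy : ⟪y, y⟫ = 1 := by rw [real_inner_self_eq_norm_sq, hy, one_pow]
  have hzz : ⟪z, z⟫ = 1 := by rw [real_inner_self_eq_norm_sq, hz, one_pow]
  have hyw : ⟪y, w⟫ = 0 := by
    rw [inner_sub_right, real_inner_smul_right, hyy, mul_one, sub_self]
  have hw : ‖w‖ = sin (angle y z) := by
    have hsin := sin_angle_mul_norm_mul_norm y z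
    rw [hy, hz, hyy, hzz, mul_one, mul_one] at hsin
    rw [hsin, ← sqrt_sq (norm_nonneg w), ← real_inner_self_eq_norm_sq]
    congr 1
    simp only [w, inner_sub_left, inner_sub_right, real_inner_smul_left, real_inner_smul_right, hyy,
      hzz, real_inner_comm y z]
    ring
  obtain ⟨u, hu, hyu, hwu⟩ : ∃ u : E, ‖u‖ = 1 ∧ ⟪y, u⟫ = 0 ∧ w = ‖w‖ • u := by
    rcases eq_or_ne w 0 with hw0 | hw0
    · obtain ⟨u, hu, hyu⟩ :=
        exists_norm_eq_one_inner_eq_zero hE (norm_ne_zero_iff.1 (hy ▸ one_ne_zero))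
      exact ⟨u, hu, hyu, by simp [hw0]⟩
    · refine ⟨‖w‖⁻¹ • w, norm_smul_inv_norm hw0, ?_, ?_⟩
      · rw [real_inner_smul_right, hyw, mul_zero]
      · rw [smul_inv_smul₀ (norm_ne_zero_iff.2 hw0)]
  refine ⟨u, hu, hyu, ?_⟩
  rw [← hw, ← hwu, cos_angle, hy, hz, mul_one, div_one, add_sub_cancel]

variable [MeasurableSpace E] [BorelSpace E]

lemma integral_comp_inner_mul_gaussian {k : ℕ} (hE : Module.finrank ℝ E = k + 2)
    {u v : E} (hu : ‖u‖ = 1) (hv : ‖v‖ = 1) (huv : ⟪u, v⟫ = 0) (K : ℝ × ℝ → ℝ) :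
    ∫ x : E, K (⟪u, x⟫, ⟪v, x⟫) * exp (-π * ‖x‖ ^ 2) =
      ∫ p : ℝ × ℝ, K p * (exp (-π * p.1 ^ 2) * exp (-π * p.2 ^ 2)) := by
  obtain ⟨b, rfl, rfl⟩ := exists_orthonormalBasis_apply_zero_apply_one hE hu hv huv
  have hcoord : ∀ (x : EuclideanSpace ℝ (Fin (k + 2))) i, ⟪b i, b.repr.symm x⟫ = x i :=
    fun x i => by rw [← b.repr_apply_apply, LinearIsometryEquiv.apply_symm_apply]
  have hgauss : ∀ x : EuclideanSpace ℝ (Fin (k + 2)),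
      exp (-π * ‖b.repr.symm x‖ ^ 2) = ∏ i, exp (-π * x i ^ 2) := fun x => by
    rw [LinearIsometryEquiv.norm_map, EuclideanSpace.real_norm_sq_eq, Finset.mul_sum, exp_sum]
  rw [← b.measurePreserving_repr_symm.integral_comp b.repr.symm.toHomeomorph.measurableEmbedding]
  simp only [hcoord, hgauss]
  have hφ : ∫ t, exp (-π * t ^ 2) = 1 := by
    rw [integral_gaussian, div_self pi_ne_zero, sqrt_one]
  exact ((EuclideanSpace.volume_preserving_symm_measurableEquiv_toLp _).integral_comp
    (MeasurableEquiv.measurableEmbedding _) (fun x => K (x 0, x 1) * ∏ i, exp (-π * x i ^ 2))).trans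
    (integral_comp_fin_two_mul_prod hφ K k)

lemma integral_mul_gaussian_eq_integral_toSphere_mul [Nontrivial E] {G : E → ℝ}
    (hG : ∀ r : ℝ, 0 < r → ∀ x, G (r • x) = G x) :
    ∫ x, G x * exp (-π * ‖x‖ ^ 2) = (∫ w : sphere (0 : E) 1, G w ∂volume.toSphere) *
      ∫ r : Ioi (0 : ℝ), exp (-π * (r : ℝ) ^ 2)
        ∂Measure.volumeIoiPow (Module.finrank ℝ E - 1) := by
  calc ∫ x, G x * exp (-π * ‖x‖ ^ 2)
      = ∫ x : ({0}ᶜ : Set E), G x * exp (-π * ‖(x : E)‖ ^ 2) ∂volume.comap Subtype.val := by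
        rw [integral_subtype_comap (measurableSet_singleton 0).compl
          fun x => G x * exp (-π * ‖x‖ ^ 2), restrict_compl_singleton]
    _ = ∫ p : sphere (0 : E) 1 × Ioi (0 : ℝ), G p.1 * exp (-π * (p.2 : ℝ) ^ 2)
          ∂(volume.toSphere.prod (Measure.volumeIoiPow (Module.finrank ℝ E - 1))) := by
        rw [← (volume : Measure E).measurePreserving_homeomorphUnitSphereProd.integral_comp
          (Homeomorph.measurableEmbedding _)]
        refine integral_congr_ae (ae_of_all _ fun x => ?_)
        have hx : 0 < ‖(x : E)‖ := norm_pos_iff.2 x.2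
        simp only [homeomorphUnitSphereProd_apply_fst_coe, homeomorphUnitSphereProd_apply_snd_coe,
          hG _ (inv_pos.2 hx)]
    _ = _ := integral_prod_mul (fun w : sphere (0 : E) 1 => G w)
          fun r : Ioi (0 : ℝ) => exp (-π * (r : ℝ) ^ 2)

lemma integral_mul_gaussian_eq_integral_toSphere [Nontrivial E] {G : E → ℝ}
    (hG : ∀ r : ℝ, 0 < r → ∀ x, G (r • x) = G x) :
    ∫ x, G x * exp (-π * ‖x‖ ^ 2) =
      ((volume : Measure E).toSphere.real univ)⁻¹ *
        ∫ w : sphere (0 : E) 1, G w ∂volume.toSphere := by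
  -- `G = 1` identifies the radial factor, since the Gaussian has total mass one.
  have hone := integral_mul_gaussian_eq_integral_toSphere_mul (G := fun _ : E => 1) fun _ _ _ => rfl
  simp only [one_mul, integral_const, smul_eq_mul, mul_one] at hone
  rw [GaussianFourier.integral_rexp_neg_mul_sq_norm pi_pos, div_self pi_ne_zero, one_rpow] at hone
  rw [integral_mul_gaussian_eq_integral_toSphere_mul hG, eq_inv_of_mul_eq_one_right hone.symm,
    mul_comm]

end

lemma integral_uniformSphereMeasure {m : ℕ} (hm : 0 < m) {G : EuclideanSpace ℝ (Fin m) → ℝ}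
    (hG : ∀ r : ℝ, 0 < r → ∀ x, G (r • x) = G x) :
    ∫ w, G w ∂uniformSphereMeasure m = ∫ x, G x * exp (-π * ‖x‖ ^ 2) := by
  have : Nontrivial (EuclideanSpace ℝ (Fin m)) :=
    Module.nontrivial_of_finrank_pos (R := ℝ) (by rwa [finrank_euclideanSpace_fin])
  rw [uniformSphereMeasure, integral_smul_measure, integral_mul_gaussian_eq_integral_toSphere hG,
    ENNReal.toReal_inv, measureReal_def, smul_eq_mul]

open InnerProductGeometry in
lemma integral_sgn_inner_mul_sgn_inner_uniformSphereMeasure {m : ℕ} (hm : 2 ≤ m)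
    {y z : EuclideanSpace ℝ (Fin m)} (hy : ‖y‖ = 1) (hz : ‖z‖ = 1) :
    ∫ w, sgn ⟪y, (w : EuclideanSpace ℝ (Fin m))⟫ * sgn ⟪z, (w : EuclideanSpace ℝ (Fin m))⟫
      ∂uniformSphereMeasure m = 1 - 2 * angle y z / π := by
  obtain ⟨k, rfl⟩ : ∃ k, m = k + 2 := ⟨m - 2, by omega⟩
  have hdim : Module.finrank ℝ (EuclideanSpace ℝ (Fin (k + 2))) = k + 2 :=
    finrank_euclideanSpace_fin
  set α := angle y z
  obtain ⟨u, hu, hyu, hzu⟩ :=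
    exists_eq_cos_angle_smul_add_sin_angle_smul (by rw [hdim]; exact le_add_self) hy hz
  have hG : ∀ r : ℝ, 0 < r → ∀ x, sgn ⟪y, r • x⟫ * sgn ⟪z, r • x⟫ = sgn ⟪y, x⟫ * sgn ⟪z, x⟫ :=
    fun r hr x => by simp only [real_inner_smul_right, sgn_mul_of_pos hr]
  have hzx : ∀ x, ⟪z, x⟫ = cos α * ⟪y, x⟫ + sin α * ⟪u, x⟫ := fun x => by
    rw [hzu, inner_add_left, real_inner_smul_left, real_inner_smul_left]
  rw [integral_uniformSphereMeasure (G := fun x => sgn ⟪y, x⟫ * sgn ⟪z, x⟫) (by omega) hG]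
  simp only [hzx]
  rw [integral_comp_inner_mul_gaussian hdim hy hu hyu
      fun p => sgn p.1 * sgn (cos α * p.1 + sin α * p.2),
    integral_sgn_mul_sgn_cos_sin_mul_gaussian (angle_nonneg y z) (angle_le_pi y z)]

/-- **Grothendieck identity.** For unit vectors `y, z ∈ ℝᵐ` (`m ≥ 2`) and `w` uniformly
distributed on the unit sphere `S^{m-1}`,
`E[sgn⟨y,w⟩ · sgn⟨z,w⟩] = (2/π)·arcsin⟨y,z⟩`. -/
theorem grothendieck_identity (m : ℕ) (hm : 2 ≤ m)
    (y z : EuclideanSpace ℝ (Fin m)) (hy : ‖y‖ = 1) (hz : ‖z‖ = 1) :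
    ∫ w : sphere (0 : EuclideanSpace ℝ (Fin m)) 1,
        sgn ⟪y, (w : EuclideanSpace ℝ (Fin m))⟫ * sgn ⟪z, (w : EuclideanSpace ℝ (Fin m))⟫
        ∂(uniformSphereMeasure m) =
      (2 / Real.pi) * Real.arcsin ⟪y, z⟫ := by
  rw [integral_sgn_inner_mul_sgn_inner_uniformSphereMeasure hm hy hz, InnerProductGeometry.angle,
    hy, hz, mul_one, div_one, arcsin_eq_pi_div_two_sub_arccos]
  field_simp
end

section
/- Let G and H be simple d-regular bipartite graphs (d ≥ 1) on the same vertex set {1,…,n} with the same bipartition L ∪ R, let M = A_H − A_G, and for each i let z_i ∈ ℝ^n be the i-th column of the matrix I + M/√d. Then: (1) 1 ≤ ‖z_i‖² ≤ 3 for every i; (2) for all i,j, M_{ij}·⟨z_i, z_j⟩ equals 2/√d if {i,j} ∈ E(G) Δ E(H) and equals 0 if M_{ij} = 0; and consequently, setting y_i = z_i/‖z_i‖, one has Σ_{i,j=1}^n M_{ij}·⟨y_i, y_j⟩ ≥ (4/(3√d))·|E(G) Δ E(H)|. -/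
/-!
Since `M = A_H - A_G` is symmetric, the Gram matrix of the columns of `Z = I + M/√d` is
`I + (2/√d) M + MᵀM/d`. If `M i j ≠ 0` then `(MᵀM) i j = 0`: a common neighbour of `i` and `j`
in `G ∪ H` would close a triangle, which both graphs being bipartite with the same sides forbids.
Hence `M i j ⟨z i, z j⟩ = 2 (M i j)² / √d = 2 / √d`. On the diagonal
`0 ≤ (MᵀM) i i ≤ deg_G i + deg_H i = 2d`, so `‖z i‖² ∈ [1, 3]`, and normalising costs at most a
factor `3` on each of the `2 |E(G) Δ E(H)|` ordered pairs with `M i j ≠ 0`.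
-/

open Matrix

/-- The adjacency matrix of a simple graph `G` on vertex set `Fin n`, with real entries. -/
noncomputable def adjMat {n : ℕ} (G : SimpleGraph (Fin n)) : Matrix (Fin n) (Fin n) ℝ :=
  letI := Classical.decRel G.Adj
  G.adjMatrix ℝ

open Finset

namespace Matrix

variable {V R : Type*} [Fintype V]

theorem transpose_mul_self_apply_eq_zero_of_bipartite [NonUnitalNonAssocSemiring R]
    {M : Matrix V V R} (L : Set V) (hL : ∀ i j, M i j ≠ 0 → (i ∈ L ↔ j ∉ L)) {i j : V}
    (hij : M i j ≠ 0) : (Mᵀ * M) i j = 0 := by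
  refine sum_eq_zero fun k _ => ?_
  by_cases hki : M k i = 0
  · simp [hki]
  by_cases hkj : M k j = 0
  · simp [hkj]
  have := hL k i hki; have := hL k j hkj; have := hL i j hij
  tauto

variable [DecidableEq V] [CommRing R] {M : Matrix V V R}

theorem transpose_one_add_smul_mul_self (hM : Mᵀ = M) (c : R) :
    (1 + c • M)ᵀ * (1 + c • M) = 1 + (2 * c) • M + c ^ 2 • (Mᵀ * M) := by
  rw [transpose_add, transpose_one, transpose_smul, hM]
  simp only [add_mul, mul_add, one_mul, mul_one, smul_mul_smul, two_mul, add_smul, sq]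
  abel

theorem transpose_one_add_smul_mul_self_apply_self (hM : Mᵀ = M) {i : V} (hii : M i i = 0)
    (c : R) :
    ((1 + c • M)ᵀ * (1 + c • M) : Matrix V V R) i i = 1 + c ^ 2 * (Mᵀ * M) i i := by
  rw [transpose_one_add_smul_mul_self hM]
  simp [hii]

theorem mul_transpose_one_add_smul_mul_self_apply [Nontrivial R] (hM : Mᵀ = M) (L : Set V)
    (hL : ∀ i j, M i j ≠ 0 → (i ∈ L ↔ j ∉ L)) {i j : V} (hij : M i j * M i j = 1) (c : R) :
    M i j * ((1 + c • M)ᵀ * (1 + c • M) : Matrix V V R) i j = 2 * c := by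
  have hne : M i j ≠ 0 := left_ne_zero_of_mul_eq_one hij
  have hij' : i ≠ j := by
    rintro rfl
    simpa using hL i i hne
  rw [transpose_one_add_smul_mul_self hM, add_apply, add_apply, one_apply_ne hij', smul_apply,
    smul_apply, transpose_mul_self_apply_eq_zero_of_bipartite L hL hne, smul_eq_mul,
    smul_eq_mul, mul_zero, zero_add, add_zero, mul_left_comm, hij, mul_one]

end Matrix

namespace SimpleGraph

variable {V R : Type*} {G H : SimpleGraph V}

theorem edgeSet_symmDiff : (symmDiff G H).edgeSet = symmDiff G.edgeSet H.edgeSet := by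
  simp [symmDiff_def, edgeSet_sup, edgeSet_sdiff]

variable [DecidableRel G.Adj] [DecidableRel H.Adj]

theorem adjMatrix_sub_adjMatrix_apply_ne_zero_iff [Ring R] [Nontrivial R] {i j : V} :
    (H.adjMatrix R - G.adjMatrix R) i j ≠ 0 ↔ (symmDiff G H).Adj i j := by
  by_cases hG : G.Adj i j <;> by_cases hH : H.Adj i j <;> simp [symmDiff_def, hG, hH]

theorem mul_self_adjMatrix_sub_adjMatrix_apply [Ring R] {i j : V}
    (hij : (H.adjMatrix R - G.adjMatrix R) i j ≠ 0) :
    (H.adjMatrix R - G.adjMatrix R) i j * (H.adjMatrix R - G.adjMatrix R) i j = 1 := by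
  by_cases hG : G.Adj i j <;> by_cases hH : H.Adj i j <;> simp_all

variable [Fintype V]

theorem sum_adjMatrix_apply_left [NonAssocSemiring R] (i : V) :
    ∑ k, G.adjMatrix R k i = G.degree i := by
  simpa [vecMul, dotProduct] using G.adjMatrix_vecMul_apply (α := R) i (fun _ => 1)

theorem transpose_mul_self_adjMatrix_sub_adjMatrix_apply_self_le [Ring R] [LinearOrder R]
    [IsStrictOrderedRing R] (i : V) :
    ((H.adjMatrix R - G.adjMatrix R)ᵀ * (H.adjMatrix R - G.adjMatrix R)) i i ≤
      G.degree i + H.degree i := by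
  rw [← sum_adjMatrix_apply_left, ← sum_adjMatrix_apply_left, ← sum_add_distrib]
  refine sum_le_sum fun k _ => ?_
  by_cases hG : G.Adj k i <;> by_cases hH : H.Adj k i <;> simp [hG, hH]

theorem two_mul_card_edgeFinset_mul_le_sum [CommSemiring R] [PartialOrder R] [IsOrderedRing R]
    (K : SimpleGraph V) [DecidableRel K.Adj] {f : V → V → R} {c : R}
    (hadj : ∀ i j, K.Adj i j → c ≤ f i j) (hnadj : ∀ i j, ¬K.Adj i j → 0 ≤ f i j) :
    2 * #K.edgeFinset * c ≤ ∑ i, ∑ j, f i j := by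
  have hrow (i : V) : ∑ j, (if K.Adj i j then c else 0) = K.degree i * c := by
    rw [sum_ite, sum_const_zero, add_zero, sum_const, nsmul_eq_mul,
      ← card_neighborFinset_eq_degree, neighborFinset_eq_filter]
  calc 2 * #K.edgeFinset * c = ∑ i, ∑ j, if K.Adj i j then c else 0 := by
        simp_rw [hrow, ← sum_mul, ← Nat.cast_sum, sum_degrees_eq_twice_card_edges]
        push_cast; rfl
    _ ≤ ∑ i, ∑ j, f i j := by
        gcongr with i _ j _
        split_ifs with h
        exacts [hadj i j h, hnadj i j h]

variable [DecidableEq V]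

theorem transpose_one_add_smul_adjMatrix_sub_adjMatrix_mul_self_apply_self_mem_Icc {d : ℕ}
    (hd : 0 < d) (hG : G.IsRegularOfDegree d) (hH : H.IsRegularOfDegree d) (i : V) :
    let Z := 1 + (√d)⁻¹ • (H.adjMatrix ℝ - G.adjMatrix ℝ)
    (Zᵀ * Z) i i ∈ Set.Icc 1 3 := by
  intro Z
  set M := H.adjMatrix ℝ - G.adjMatrix ℝ
  have hd' : (0 : ℝ) < d := by exact_mod_cast hd
  have hMt : Mᵀ = M := by simp [M, transpose_sub]
  have hMM_nonneg : 0 ≤ (Mᵀ * M) i i := sum_nonneg fun k _ => mul_self_nonneg (M k i)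
  have hMM_le : (Mᵀ * M) i i ≤ 2 * d := by
    have := transpose_mul_self_adjMatrix_sub_adjMatrix_apply_self_le (R := ℝ) (G := G) (H := H) i
    rw [hG i, hH i] at this
    linarith
  rw [transpose_one_add_smul_mul_self_apply_self hMt (by simp [M]), inv_pow, Real.sq_sqrt hd'.le]
  have : (d : ℝ)⁻¹ * (Mᵀ * M) i i ≤ 2 := by rw [inv_mul_le_iff₀ hd']; linarith
  constructor <;> nlinarith [inv_nonneg.2 hd'.le]

end SimpleGraph

theorem IsBipartiteWith.symmDiff {n : ℕ} {G H : SimpleGraph (Fin n)} {L : Set (Fin n)}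
    (hG : IsBipartiteWith G L) (hH : IsBipartiteWith H L) :
    IsBipartiteWith (symmDiff G H) L := by
  rintro u v (⟨h, -⟩ | ⟨h, -⟩)
  exacts [hG u v h, hH u v h]

theorem Real.inv_le_inv_sqrt_mul_inv_sqrt {a b c : ℝ} (ha : 0 < a) (hac : a ≤ c) (hb : 0 < b)
    (hbc : b ≤ c) : c⁻¹ ≤ (√a)⁻¹ * (√b)⁻¹ := by
  rw [← mul_inv, ← Real.sqrt_mul ha.le]
  exact inv_anti₀ (by positivity) (Real.sqrt_le_iff.2 ⟨by linarith, by nlinarith⟩)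

/-- **The SDP vectors for cut rigidity.** Let `G, H` be simple `d`-regular bipartite graphs
on `{1,…,n}` with the same bipartition, `M = A_H - A_G`, and let `zᵢ` be the `i`-th column of
`I + M/√d`. Then `1 ≤ ‖zᵢ‖² ≤ 3`; `M_ij⟨zᵢ,zⱼ⟩ = 2/√d` when `{i,j} ∈ E(G) Δ E(H)` and `= 0`
when `M_ij = 0`; and for `yᵢ = zᵢ/‖zᵢ‖` one has
`Σ_{ij} M_ij ⟨yᵢ,yⱼ⟩ ≥ (4/(3√d))·|E(G) Δ E(H)|`. -/
theorem sdp_vectors_for_cut_rigidity (n d : ℕ) (hd : 1 ≤ d) (L : Set (Fin n))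
    (G H : SimpleGraph (Fin n))
    (hG : IsRegOfDeg G d) (hH : IsRegOfDeg H d)
    (hGbip : IsBipartiteWith G L) (hHbip : IsBipartiteWith H L)
    (M : Matrix (Fin n) (Fin n) ℝ) (hM : M = adjMat H - adjMat G)
    (z : Fin n → Fin n → ℝ)
    (hz : ∀ i j, z i j = ((1 : Matrix (Fin n) (Fin n) ℝ) + (Real.sqrt d)⁻¹ • M) j i)
    (y : Fin n → Fin n → ℝ)
    (hy : ∀ i, y i = (Real.sqrt (∑ k, (z i k) ^ 2))⁻¹ • z i) :
    (∀ i, 1 ≤ ∑ k, (z i k) ^ 2 ∧ ∑ k, (z i k) ^ 2 ≤ 3) ∧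
    (∀ i j,
      (s(i, j) ∈ symmDiff G.edgeSet H.edgeSet →
        M i j * (∑ k, z i k * z j k) = 2 / Real.sqrt d) ∧
      (M i j = 0 → M i j * (∑ k, z i k * z j k) = 0)) ∧
    (4 / (3 * Real.sqrt d)) * ((symmDiff G.edgeSet H.edgeSet).ncard : ℝ) ≤
      ∑ i, ∑ j, M i j * ∑ k, y i k * y j k := by
  classical
  subst hM
  set Z : Matrix (Fin n) (Fin n) ℝ := 1 + (√d)⁻¹ • (adjMat H - adjMat G)
  have hgram (i j) : ∑ k, z i k * z j k = (Zᵀ * Z) i j := by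
    simp only [hz]
    rfl
  have hsupp (i j) : (adjMat H - adjMat G) i j ≠ 0 ↔ (symmDiff G H).Adj i j :=
    SimpleGraph.adjMatrix_sub_adjMatrix_apply_ne_zero_iff
  have hnorm (i) : 1 ≤ ∑ k, z i k ^ 2 ∧ ∑ k, z i k ^ 2 ≤ 3 := by
    simp only [sq, hgram]
    exact SimpleGraph.transpose_one_add_smul_adjMatrix_sub_adjMatrix_mul_self_apply_self_mem_Icc
      hd hG hH i
  have hcore (i j) (h : (symmDiff G H).Adj i j) :
      (adjMat H - adjMat G) i j * ∑ k, z i k * z j k = 2 / √d := by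
    rw [hgram, Matrix.mul_transpose_one_add_smul_mul_self_apply (by simp [adjMat, transpose_sub]) L
      (fun i j h => hGbip.symmDiff hHbip i j ((hsupp i j).1 h))
      (SimpleGraph.mul_self_adjMatrix_sub_adjMatrix_apply ((hsupp i j).2 h)), div_eq_mul_inv]
  refine ⟨hnorm, fun i j => ⟨fun h => hcore i j ?_, fun h => by rw [h, zero_mul]⟩, ?_⟩
  · rwa [← SimpleGraph.edgeSet_symmDiff] at h
  rw [← SimpleGraph.edgeSet_symmDiff, ← SimpleGraph.coe_edgeFinset, Set.ncard_coe_finset]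
  refine le_of_eq_of_le (by ring) ((symmDiff G H).two_mul_card_edgeFinset_mul_le_sum
    (c := 3⁻¹ * (2 / √d)) (fun i j h => ?_) (fun i j h => ?_))
  · obtain ⟨hi1, hi3⟩ := hnorm i
    obtain ⟨hj1, hj3⟩ := hnorm j
    have hy_inner : ∑ k, y i k * y j k =
        (√(∑ k, z i k ^ 2))⁻¹ * (√(∑ k, z j k ^ 2))⁻¹ * ∑ k, z i k * z j k := by
      simp only [hy, Pi.smul_apply, smul_eq_mul, mul_sum]
      exact sum_congr rfl fun k _ => by ring
    rw [hy_inner, mul_left_comm, hcore i j h]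
    gcongr
    exact Real.inv_le_inv_sqrt_mul_inv_sqrt (by linarith) hi3 (by linarith) hj3
  · rw [← hsupp, not_not] at h
    rw [h, zero_mul]
end
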